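/- arXiv:2601.09477 — 9 statements merged into one kernel-verified Lean document; each statement's English description precedes it below -/
import Mathlib

section
/- Let m be a natural number, let x, y : Fin (2^m) → ℝ, and let H denote the unnormalized Walsh–Hadamard transform. Then H((Hx) ∘ (Hy)) = 2^m • (x *_⊕ y), where ∘ denotes the pointwise (Hadamard) product of vectors and x *_⊕ y is the XOR-convolution. In particular, the XOR-convolution used in the FWHT variant of compressed matrix multiplication is computed by transforming, multiplying pointwise, and transforming again. -/
/-- The number of 1-bits in the binary representation of a natural number. -/
def popCount (n : ℕ) : ℕ := (Nat.bits n).count true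

/-- Bitwise XOR on `Fin (2^m)`. -/
def fxor {m : ℕ} (i j : Fin (2^m)) : Fin (2^m) :=
  ⟨i.val ^^^ j.val, Nat.xor_lt_two_pow i.isLt j.isLt⟩

/-- The unnormalized Walsh–Hadamard transform:
`(Hx)[k] = Σ_j (-1)^(popCount (k AND j)) x[j]`. -/
def wht {m : ℕ} (x : Fin (2^m) → ℝ) : Fin (2^m) → ℝ :=
  fun k => ∑ j, (-1 : ℝ) ^ popCount (k.val &&& j.val) * x j

/-- The XOR-convolution: `(x *⊕ y)[k] = Σ_{i ⊕ j = k} x[i]·y[j]`. -/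
def xorConv {m : ℕ} (x y : Fin (2^m) → ℝ) : Fin (2^m) → ℝ :=
  fun k => ∑ p ∈ Finset.univ.filter (fun p : Fin (2^m) × Fin (2^m) => fxor p.1 p.2 = k),
    x p.1 * y p.2

/-!
The characters `χ_j a = (-1) ^ popCount (j &&& a)` are multiplicative under XOR, because
`popCount (a ^^^ b) ≡ popCount a + popCount b (mod 2)`, and they are orthogonal:
`∑_j χ_j t = 2 ^ m` if `t = 0` and `0` otherwise. Expanding,
`H (Hx * Hy) k = ∑_{a,b} x a * y b * ∑_j χ_j (k ^^^ a ^^^ b)`, and orthogonality keeps exactly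
the pairs with `a ^^^ b = k`, each with weight `2 ^ m`.
-/

open Finset

lemma popCount_bit (b : Bool) (n : ℕ) : popCount (Nat.bit b n) = popCount n + b.toNat := by
  by_cases h : n = 0 ∧ b = false
  · obtain ⟨rfl, rfl⟩ := h; rfl
  · rw [popCount, Nat.bits_append_bit n b fun hn => by simpa [hn] using h]
    cases b <;> simp [popCount]

lemma popCount_eq_sum_testBit {N n : ℕ} (h : n < 2 ^ N) :
    popCount n = ∑ i ∈ range N, (n.testBit i).toNat := by
  induction N generalizing n with
  | zero => simp [Nat.lt_one_iff.mp (by simpa using h), popCount]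
  | succ N ih =>
    conv_lhs => rw [← Nat.bit_testBit_zero_shiftRight_one n]
    rw [popCount_bit, ih (by rw [Nat.shiftRight_one]; omega), sum_range_succ', Nat.shiftRight_one]
    simp only [Nat.testBit_succ]

lemma popCount_two_pow (i : ℕ) : popCount (2 ^ i) = 1 := by
  simp [popCount_eq_sum_testBit (Nat.pow_lt_pow_right one_lt_two i.lt_succ_self),
    Nat.testBit_two_pow, Bool.toNat, Bool.cond_decide, sum_ite_eq]

lemma popCount_xor_add_two_mul_popCount_and (a b : ℕ) :
    popCount (a ^^^ b) + 2 * popCount (a &&& b) = popCount a + popCount b := by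
  have ha : a < 2 ^ (a + b) :=
    Nat.lt_two_pow_self.trans_le (Nat.pow_le_pow_right two_pos (by omega))
  have hb : b < 2 ^ (a + b) :=
    Nat.lt_two_pow_self.trans_le (Nat.pow_le_pow_right two_pos (by omega))
  rw [popCount_eq_sum_testBit ha, popCount_eq_sum_testBit hb,
    popCount_eq_sum_testBit (Nat.xor_lt_two_pow ha hb),
    popCount_eq_sum_testBit (Nat.and_lt_two_pow a hb), mul_sum, ← sum_add_distrib,
    ← sum_add_distrib]
  refine sum_congr rfl fun i _ => ?_
  rw [Nat.testBit_xor, Nat.testBit_and]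
  cases a.testBit i <;> cases b.testBit i <;> rfl

section Sign

variable {R : Type*}

lemma neg_one_pow_popCount_xor [Monoid R] [HasDistribNeg R] (a b : ℕ) :
    (-1 : R) ^ popCount (a ^^^ b) = (-1) ^ popCount a * (-1) ^ popCount b := by
  rw [← pow_add, ← popCount_xor_add_two_mul_popCount_and, pow_add, pow_mul, neg_one_sq, one_pow,
    mul_one]

lemma neg_one_pow_popCount_and_xor [Monoid R] [HasDistribNeg R] (j a b : ℕ) :
    (-1 : R) ^ popCount (j &&& (a ^^^ b)) =
      (-1) ^ popCount (j &&& a) * (-1) ^ popCount (j &&& b) := by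
  rw [Nat.and_xor_distrib_left, neg_one_pow_popCount_xor]

/-- Toggling bit `i` of `k` negates the term, so the terms cancel in pairs. -/
lemma sum_neg_one_pow_popCount_and_eq_zero [Ring R] {m t i : ℕ} (hi : i < m)
    (hti : t.testBit i) : ∑ k : Fin (2 ^ m), (-1 : R) ^ popCount (k.val &&& t) = 0 := by
  let e : Fin (2 ^ m) := ⟨2 ^ i, Nat.pow_lt_pow_right one_lt_two hi⟩
  refine sum_involution (fun k _ => fxor k e) (fun k _ => ?_) (fun k _ _ => ?_)
    (fun _ _ => mem_univ _) (fun k _ => Fin.ext (by simp [fxor, e]))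
  · have hflip : (k.val ^^^ 2 ^ i) &&& t = (k.val &&& t) ^^^ 2 ^ i := by
      rw [Nat.and_xor_distrib_right, Nat.two_pow_and, hti, Bool.toNat_true, mul_one]
    simp only [fxor, e, hflip, neg_one_pow_popCount_xor, popCount_two_pow, pow_one, mul_neg_one,
      add_neg_cancel]
  · simp [fxor, e, Fin.ext_iff]

lemma sum_neg_one_pow_popCount_and [Ring R] {m t : ℕ} (ht : t < 2 ^ m) :
    ∑ k : Fin (2 ^ m), (-1 : R) ^ popCount (k.val &&& t) = if t = 0 then 2 ^ m else 0 := by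
  split_ifs with h0
  · simp [h0, popCount]
  · obtain ⟨i, hti⟩ := Nat.exists_testBit_of_ne_zero h0
    have hi : i < m := by
      by_contra! hmi
      rw [Nat.testBit_lt_two_pow (ht.trans_le (Nat.pow_le_pow_right two_pos hmi))] at hti
      exact Bool.false_ne_true hti
    exact sum_neg_one_pow_popCount_and_eq_zero hi hti

end Sign

lemma xorConv_apply {m : ℕ} (x y : Fin (2 ^ m) → ℝ) (k : Fin (2 ^ m)) :
    xorConv x y k = ∑ a, ∑ b, if a.val ^^^ b.val = k.val then x a * y b else 0 := by
  rw [xorConv, sum_filter, Fintype.sum_prod_type]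
  simp [fxor, Fin.ext_iff]

lemma wht_wht_mul_wht_apply {m : ℕ} (x y : Fin (2 ^ m) → ℝ) (k : Fin (2 ^ m)) :
    wht (wht x * wht y) k =
      ∑ a, ∑ b, x a * y b *
        ∑ j : Fin (2 ^ m), (-1 : ℝ) ^ popCount (j.val &&& (k.val ^^^ (a.val ^^^ b.val))) := by
  simp only [wht, Pi.mul_apply]
  simp_rw [sum_mul_sum, mul_sum]
  rw [sum_comm]
  refine sum_congr rfl fun a _ => ?_
  rw [sum_comm]
  refine sum_congr rfl fun b _ => ?_
  simp only [neg_one_pow_popCount_and_xor, Nat.and_comm k.val]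
  exact sum_congr rfl fun j _ => by ring

/-- Transforming, multiplying pointwise (Hadamard product), and transforming
again yields `2^m` times the XOR-convolution: `H((Hx) ∘ (Hy)) = 2^m • (x *⊕ y)`. -/
theorem wht_wht_mul_wht (m : ℕ) (x y : Fin (2^m) → ℝ) :
    wht (wht x * wht y) = (2^m : ℕ) • xorConv x y := by
  funext k
  rw [wht_wht_mul_wht_apply, Pi.smul_apply, xorConv_apply, smul_sum]
  refine sum_congr rfl fun a _ => ?_
  rw [smul_sum]
  refine sum_congr rfl fun b _ => ?_
  rw [sum_neg_one_pow_popCount_and (Nat.xor_lt_two_pow k.isLt (Nat.xor_lt_two_pow a.isLt b.isLt))]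
  simp only [Nat.xor_eq_zero_iff, eq_comm (a := k.val), nsmul_eq_mul]
  split_ifs <;> push_cast <;> ring
end

section
/- Let Ω be a probability space, n a natural number, and b = 2^m. Let H1, H2 : Ω → (Fin n → Fin b) be independent random functions such that each of H1 and H2 is a pairwise independent uniform family (for each i, the value at i is uniformly distributed on Fin b, and values at distinct indices are independent). Then the combined random function G : Fin n × Fin n → Fin b given by G(i, j) = H1(i) XOR H2(j) is a pairwise independent uniform family on Fin n × Fin n: for every (i,j), G(i,j) is uniform on Fin b, and for every (i,j) ≠ (i',j') and every u, v ∈ Fin b, Pr[G(i,j) = u and G(i',j') = v] = 1/b². -/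
/-!
Fix `(i, j) ≠ (i', j')` and say `j ≠ j'`. For each value `x` of `(H1 i, H1 i')`, the map
`y ↦ (x.1 XOR y.1, x.2 XOR y.2)` is a bijection, so by independence and Fubini on the joint law,
`Pr[(G(i,j), G(i',j')) = (u, v)]` is the average over `x` of `Pr[(H2 j, H2 j') = y_x]`
for a single point `y_x`, which is `1/b²` since `(H2 j, H2 j')` is uniform.
If `j = j'`, then `i ≠ i'` and the roles of `H1` and `H2` are swapped.
The uniformity of a single `G(i,j)` is the same argument with one coordinate.

Events are only given through their outer measures. A finite partition of `Ω` whose outer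
measures sum to `1` consists of null-measurable sets, so the `H`'s are a.e.-measurable and
the product rule on fibres becomes `IndepFun H1 H2`.
-/

open MeasureTheory
open scoped ENNReal ProbabilityTheory

open ProbabilityTheory Set

lemma fxor_comm {m : ℕ} (a b : Fin (2^m)) : fxor a b = fxor b a :=
  Fin.ext (Nat.xor_comm _ _)

lemma fxor_fxor_cancel_left {m : ℕ} (a b : Fin (2^m)) : fxor a (fxor a b) = b :=
  Fin.ext (Nat.xor_xor_cancel_left _ _)

def fxorEquiv {m : ℕ} (a : Fin (2^m)) : Equiv.Perm (Fin (2^m)) :=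
  Function.Involutive.toPerm (fxor a) (fxor_fxor_cancel_left a)

@[simp]
lemma fxorEquiv_apply {m : ℕ} (a b : Fin (2^m)) : fxorEquiv a b = fxor a b := rfl

section

variable {Ω α β γ : Type*} [MeasurableSpace Ω] {μ : Measure Ω}

lemma nullMeasurableSet_of_union_eq_univ [IsFiniteMeasure μ] {A C : Set Ω}
    (hAC : A ∪ C = univ) (h : μ A + μ C ≤ μ univ) : NullMeasurableSet A μ := by
  set E := toMeasurable μ A
  set F := toMeasurable μ C
  have hEF : E ∪ F = univ :=
    univ_subset_iff.1 <| hAC ▸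
      union_subset_union (subset_toMeasurable μ A) (subset_toMeasurable μ C)
  have hinter : μ (E ∩ F) = 0 := by
    have h' := measure_union_add_inter (μ := μ) E (measurableSet_toMeasurable μ C)
    rw [measure_toMeasurable, measure_toMeasurable, hEF] at h'
    simpa using ENNReal.le_of_add_le_add_left (measure_ne_top μ univ)
      ((h'.trans_le h).trans_eq (add_zero _).symm)
  refine ⟨E, measurableSet_toMeasurable μ A, ae_eq_set.2 ⟨?_, ?_⟩⟩
  · rw [sdiff_eq_empty.2 (subset_toMeasurable μ A), measure_empty]
  refine measure_mono_null (t := E ∩ F)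
    (fun ω hω => ⟨hω.1, subset_toMeasurable μ C ?_⟩) hinter
  exact (hAC.symm ▸ mem_univ ω : ω ∈ A ∪ C).resolve_left hω.2

lemma aemeasurable_of_sum_measure_fiber_le [IsFiniteMeasure μ] [Fintype β] [MeasurableSpace β]
    [MeasurableSingletonClass β] {X : Ω → β} (h : ∑ b, μ {ω | X ω = b} ≤ μ univ) :
    AEMeasurable X μ := by
  classical
  refine NullMeasurable.aemeasurable fun s _ => ?_
  rw [← biUnion_preimage_singleton]
  refine .biUnion s.to_countable fun b _ => ?_
  refine nullMeasurableSet_of_union_eq_univ (C := ⋃ b' ∈ Finset.univ.erase b, {ω | X ω = b'})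
    ?_ ?_
  · ext ω; by_cases hb : X ω = b <;> simp [hb]
  calc μ {ω | X ω = b} + μ (⋃ b' ∈ Finset.univ.erase b, {ω | X ω = b'})
      ≤ μ {ω | X ω = b} + ∑ b' ∈ Finset.univ.erase b, μ {ω | X ω = b'} := by
        gcongr; exact measure_biUnion_finset_le _ _
    _ = ∑ b', μ {ω | X ω = b'} :=
        Finset.add_sum_erase _ (fun b' => μ {ω | X ω = b'}) (Finset.mem_univ b)
    _ ≤ μ univ := h

lemma indepFun_of_measure_fiber_and_eq_mul [IsFiniteMeasure μ] [MeasurableSpace α]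
    [MeasurableSpace β] [Countable α] [Countable β] [MeasurableSingletonClass α]
    [MeasurableSingletonClass β] {X : Ω → α} {Y : Ω → β} (hX : AEMeasurable X μ)
    (hY : AEMeasurable Y μ)
    (h : ∀ a b, μ {ω | X ω = a ∧ Y ω = b} = μ {ω | X ω = a} * μ {ω | Y ω = b}) :
    IndepFun X Y μ := by
  rw [indepFun_iff_map_prod_eq_prod_map_map hX hY]
  refine Measure.ext_of_singleton fun ⟨a, b⟩ => ?_
  rw [← singleton_prod_singleton, Measure.prod_prod,
    Measure.map_apply_of_aemeasurable (hX.prodMk hY) .of_discrete,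
    Measure.map_apply_of_aemeasurable hX .of_discrete,
    Measure.map_apply_of_aemeasurable hY .of_discrete]
  exact h a b

lemma ProbabilityTheory.IndepFun.measure_equiv_eq [IsProbabilityMeasure μ] [MeasurableSpace α]
    [MeasurableSpace β] [Countable α] [Countable β] [MeasurableSingletonClass α]
    [MeasurableSingletonClass β] {X : Ω → α} {Y : Ω → β} (hXY : IndepFun X Y μ)
    (hX : AEMeasurable X μ) (hY : AEMeasurable Y μ) {c : ℝ≥0∞}
    (hYc : ∀ b, μ {ω | Y ω = b} = c) (e : α → β ≃ γ) (w : γ) :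
    μ {ω | e (X ω) (Y ω) = w} = c := by
  have hfiber (a : α) : Prod.mk a ⁻¹' {p : α × β | e p.1 p.2 = w} = {(e a).symm w} := by
    ext b; simp [Equiv.eq_symm_apply]
  calc μ {ω | e (X ω) (Y ω) = w}
      = μ.map (fun ω => (X ω, Y ω)) {p | e p.1 p.2 = w} := by
        rw [Measure.map_apply_of_aemeasurable (hX.prodMk hY) .of_discrete]; rfl
    _ = ∫⁻ a, (μ.map Y) {(e a).symm w} ∂(μ.map X) := by
        rw [hXY.map_prod_eq_prod_map_map hX hY, Measure.prod_apply .of_discrete]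
        simp only [hfiber]
    _ = ∫⁻ _, c ∂(μ.map X) := by
        simp only [Measure.map_apply_of_aemeasurable hY .of_discrete]
        exact lintegral_congr fun a => hYc _
    _ = c := by simp [Measure.map_apply_of_aemeasurable hX .of_discrete]

lemma measure_pair_eq_sq {ι : Type*} {H : Ω → ι → β} {c : ℝ≥0∞}
    (hunif : ∀ i u, μ {ω | H ω i = u} = c)
    (hpair : ∀ i i', i ≠ i' → ∀ u v,
      μ {ω | H ω i = u ∧ H ω i' = v} = μ {ω | H ω i = u} * μ {ω | H ω i' = v})
    {i i' : ι} (hi : i ≠ i') (p : β × β) : μ {ω | (H ω i, H ω i') = p} = c ^ 2 := by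
  simp only [Prod.ext_iff]
  rw [hpair i i' hi, hunif, hunif, sq]

end

/-- If `H1, H2 : Ω → (Fin n → Fin (2^m))` are independent random functions, each a
pairwise independent uniform family into `Fin b` with `b = 2^m`, then the combined
random function `G(i,j) = H1(i) XOR H2(j)` is a pairwise independent uniform family
on `Fin n × Fin n`: each `G(i,j)` is uniform on `Fin b`, and for `(i,j) ≠ (i',j')`
and every `u, v`, `Pr[G(i,j) = u ∧ G(i',j') = v] = 1/b²`. -/
theorem xor_combined_hash_pairwise_independent_uniform
    {Ω : Type*} [MeasureSpace Ω] [IsProbabilityMeasure (ℙ : Measure Ω)]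
    (n m : ℕ) (H1 H2 : Ω → Fin n → Fin (2^m))
    -- H1 and H2 are independent (as function-valued random variables):
    (hindep : ∀ f g : Fin n → Fin (2^m),
      ℙ {ω | H1 ω = f ∧ H2 ω = g} = ℙ {ω | H1 ω = f} * ℙ {ω | H2 ω = g})
    -- H1 is a pairwise independent uniform family:
    (hH1unif : ∀ i u, ℙ {ω | H1 ω i = u} = 1 / (2^m : ℝ≥0∞))
    (hH1pair : ∀ i i', i ≠ i' → ∀ u v,
      ℙ {ω | H1 ω i = u ∧ H1 ω i' = v} = ℙ {ω | H1 ω i = u} * ℙ {ω | H1 ω i' = v})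
    -- H2 is a pairwise independent uniform family:
    (hH2unif : ∀ j u, ℙ {ω | H2 ω j = u} = 1 / (2^m : ℝ≥0∞))
    (hH2pair : ∀ j j', j ≠ j' → ∀ u v,
      ℙ {ω | H2 ω j = u ∧ H2 ω j' = v} = ℙ {ω | H2 ω j = u} * ℙ {ω | H2 ω j' = v}) :
    (∀ i j : Fin n, ∀ u : Fin (2^m),
      ℙ {ω | fxor (H1 ω i) (H2 ω j) = u} = 1 / (2^m : ℝ≥0∞)) ∧
    (∀ i j i' j' : Fin n, (i, j) ≠ (i', j') → ∀ u v : Fin (2^m),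
      ℙ {ω | fxor (H1 ω i) (H2 ω j) = u ∧ fxor (H1 ω i') (H2 ω j') = v}
        = 1 / ((2^m : ℝ≥0∞))^2) := by
  have hH1 : AEMeasurable H1 ℙ := aemeasurable_pi_lambda _ fun i =>
    aemeasurable_of_sum_measure_fiber_le (by simp [hH1unif, ENNReal.mul_inv_cancel])
  have hH2 : AEMeasurable H2 ℙ := aemeasurable_pi_lambda _ fun j =>
    aemeasurable_of_sum_measure_fiber_le (by simp [hH2unif, ENNReal.mul_inv_cancel])
  have hind : IndepFun H1 H2 ℙ := indepFun_of_measure_fiber_and_eq_mul hH1 hH2 hindep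
  have hpairs : ∀ i i' j j' : Fin n,
      IndepFun (fun ω => (H1 ω i, H1 ω i')) (fun ω => (H2 ω j, H2 ω j')) ℙ := fun i i' j j' =>
    hind.comp (φ := fun f => (f i, f i')) (ψ := fun g => (g j, g j')) .of_discrete .of_discrete
  refine ⟨fun i j u => ?_, fun i j i' j' hne u v => ?_⟩
  · have hij : IndepFun (fun ω => H1 ω i) (fun ω => H2 ω j) ℙ :=
      hind.comp (measurable_pi_apply i) (measurable_pi_apply j)
    exact hij.measure_equiv_eq (hH1.eval i) (hH2.eval j) (hH2unif j) fxorEquiv u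
  rw [one_div, ENNReal.inv_pow, ← one_div]
  by_cases hj : j = j'
  · have hi : i ≠ i' := by rintro rfl; exact hne (by rw [hj])
    have := (hpairs i i' j j').symm.measure_equiv_eq ((hH2.eval j).prodMk (hH2.eval j'))
      ((hH1.eval i).prodMk (hH1.eval i')) (measure_pair_eq_sq hH1unif hH1pair hi)
      (fun y => (fxorEquiv y.1).prodCongr (fxorEquiv y.2)) (u, v)
    simpa [fxor_comm] using this
  · have := (hpairs i i' j j').measure_equiv_eq ((hH1.eval i).prodMk (hH1.eval i'))
      ((hH2.eval j).prodMk (hH2.eval j')) (measure_pair_eq_sq hH2unif hH2pair hj)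
      (fun x => (fxorEquiv x.1).prodCongr (fxorEquiv x.2)) (u, v)
    simpa using this
end

section
/- Let Ω be a probability space, n and b positive natural numbers. Let H1, H2 : Ω → (Fin n → ZMod b) be independent random functions such that each of H1 and H2 is a pairwise independent uniform family (for each i, the value at i is uniformly distributed on ZMod b, and values at distinct indices are independent). Then the combined random function G : Fin n × Fin n → ZMod b given by G(i, j) = H1(i) + H2(j) (addition modulo b) is a pairwise independent uniform family on Fin n × Fin n: each G(i,j) is uniform on ZMod b, and for (i,j) ≠ (i',j') and any u, v ∈ ZMod b, Pr[G(i,j) = u and G(i',j') = v] = 1/b². -/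
open MeasureTheory
open scoped ENNReal ProbabilityTheory

/-!
No measurability of `H1`, `H2` is assumed, so additivity of `ℙ` has to be earned first: the
complement of a coordinate event `{H i = u}` is covered by the other `b - 1` fibers, whence
`ℙ A + ℙ Aᶜ ≤ 1`, and for a finite measure this already makes `A` null-measurable.

Then condition on one of the two functions. If `j ≠ j'`, for each fixed value `f` of `H1` the
pair `(f i + H2 j, f i' + H2 j')` is a translate of the uniform pair `(H2 j, H2 j')`, so it hits
`(u, v)` with probability `1 / b²`; averaging over `f` against the law of `H1` gives `1 / b²`.
If `i ≠ i'`, condition on `H2` instead. Uniformity of a single `G (i, j)` is the same argument.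
-/

namespace MeasureTheory

variable {Ω : Type*} [MeasurableSpace Ω] {μ : Measure Ω}

theorem nullMeasurableSet_of_measure_add_measure_compl_le [IsFiniteMeasure μ] {s : Set Ω}
    (h : μ s + μ sᶜ ≤ μ Set.univ) : NullMeasurableSet s μ := by
  set t := toMeasurable μ s
  have hst : s ⊆ t := subset_toMeasurable μ s
  have ht : MeasurableSet t := measurableSet_toMeasurable μ s
  have hcompl : μ sᶜ = μ (t \ s) + μ tᶜ := by
    rw [← measure_inter_add_sdiff sᶜ ht, Set.inter_comm, ← Set.sdiff_eq,
      Set.sdiff_eq (s := sᶜ), Set.inter_eq_right.2 (Set.compl_subset_compl.2 hst)]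
  have hle : μ (t \ s) + (μ s + μ tᶜ) ≤ 0 + (μ s + μ tᶜ) :=
    calc μ (t \ s) + (μ s + μ tᶜ) = μ s + μ sᶜ := by rw [hcompl]; ring
      _ ≤ μ t + μ tᶜ := h.trans_eq (measure_add_measure_compl ht).symm
      _ = 0 + (μ s + μ tᶜ) := by rw [measure_toMeasurable, zero_add]
  have hnull : μ (t \ s) = 0 :=
    nonpos_iff_eq_zero.1 (ENNReal.le_of_add_le_add_right (by finiteness) hle)
  rw [← Set.sdiff_sdiff_cancel_left hst]
  exact ht.nullMeasurableSet.diff (.of_null hnull)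

theorem nullMeasurableSet_fiber_of_sum_measure_fiber_le [IsFiniteMeasure μ] {β : Type*}
    [Fintype β] (X : Ω → β) (h : ∑ c, μ {ω | X ω = c} ≤ μ Set.univ) (c : β) :
    NullMeasurableSet {ω | X ω = c} μ := by
  classical
  refine nullMeasurableSet_of_measure_add_measure_compl_le (h.trans' ?_)
  have hcompl : {ω | X ω = c}ᶜ ⊆ ⋃ c' ∈ Finset.univ.erase c, {ω | X ω = c'} :=
    fun ω hω => Set.mem_biUnion (Finset.mem_erase.2 ⟨hω, Finset.mem_univ _⟩) rfl
  calc μ {ω | X ω = c} + μ {ω | X ω = c}ᶜ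
      ≤ μ {ω | X ω = c} + ∑ c' ∈ Finset.univ.erase c, μ {ω | X ω = c'} := by
        gcongr
        exact (measure_mono hcompl).trans (measure_biUnion_finset_le _ _)
    _ = ∑ c', μ {ω | X ω = c'} :=
        Finset.add_sum_erase _ (fun c' => μ {ω | X ω = c'}) (Finset.mem_univ c)

theorem nullMeasurableSet_fiber_of_measure_fiber_eq_inv_card [IsProbabilityMeasure μ]
    {β : Type*} [Fintype β] (X : Ω → β) (h : ∀ c, μ {ω | X ω = c} = 1 / Fintype.card β)
    (c : β) : NullMeasurableSet {ω | X ω = c} μ := by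
  have hcard : (Fintype.card β : ℝ≥0∞) ≠ 0 := by
    have : Nonempty β := ⟨c⟩
    exact_mod_cast Fintype.card_ne_zero
  refine nullMeasurableSet_fiber_of_sum_measure_fiber_le X (le_of_eq ?_) c
  rw [Finset.sum_congr rfl fun c _ => h c, Finset.sum_const, Finset.card_univ, nsmul_eq_mul,
    one_div, ENNReal.mul_inv_cancel hcard (ENNReal.natCast_ne_top _), measure_univ]

theorem nullMeasurableSet_fiber_of_forall_eval {ι β : Type*} [Countable ι] (X : Ω → ι → β)
    (h : ∀ i c, NullMeasurableSet {ω | X ω i = c} μ) (f : ι → β) :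
    NullMeasurableSet {ω | X ω = f} μ := by
  simpa only [funext_iff, Set.ofPred_forall] using NullMeasurableSet.iInter fun i => h i (f i)

theorem measure_mem_eq_sum_measure_fiber {γ : Type*} [Fintype γ] (Z : Ω → γ)
    (hZ : ∀ z, NullMeasurableSet {ω | Z ω = z} μ) (S : Set γ) [DecidablePred (· ∈ S)] :
    μ {ω | Z ω ∈ S} = ∑ z with z ∈ S, μ {ω | Z ω = z} := by
  rw [← measure_biUnion_finset₀ ?_ fun z _ => hZ z]
  · congr 1
    ext ω
    simp
  · exact fun z _ z' _ hzz' => Disjoint.aedisjoint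
      (Set.disjoint_left.2 fun ω h h' => hzz' (h.symm.trans h'))

section Independent

variable {α β : Type*} [Fintype α] [Fintype β] (X : Ω → α) (Y : Ω → β)

theorem measure_prod_mem_eq_sum_mul (hX : ∀ a, NullMeasurableSet {ω | X ω = a} μ)
    (hY : ∀ c, NullMeasurableSet {ω | Y ω = c} μ)
    (hXY : ∀ a c, μ {ω | X ω = a ∧ Y ω = c} = μ {ω | X ω = a} * μ {ω | Y ω = c})
    (E : Set (α × β)) :
    μ {ω | (X ω, Y ω) ∈ E} = ∑ a, μ {ω | X ω = a} * μ {ω | (a, Y ω) ∈ E} := by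
  classical
  have hXYfiber (z : α × β) : NullMeasurableSet {ω | (X ω, Y ω) = z} μ := by
    simpa only [Prod.ext_iff, Set.ofPred_and] using (hX z.1).inter (hY z.2)
  rw [measure_mem_eq_sum_measure_fiber _ hXYfiber, Finset.sum_filter, Fintype.sum_prod_type]
  refine Finset.sum_congr rfl fun a _ => ?_
  rw [show {ω | (a, Y ω) ∈ E} = {ω | Y ω ∈ {c | (a, c) ∈ E}} from rfl,
    measure_mem_eq_sum_measure_fiber Y hY, Finset.sum_filter, Finset.mul_sum]
  refine Finset.sum_congr rfl fun c _ => ?_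
  simp only [Prod.mk.injEq, Set.mem_ofPred_eq, hXY, mul_ite, mul_zero]

theorem measure_prod_mem_eq_of_measure_section_eq [IsProbabilityMeasure μ]
    (hX : ∀ a, NullMeasurableSet {ω | X ω = a} μ)
    (hY : ∀ c, NullMeasurableSet {ω | Y ω = c} μ)
    (hXY : ∀ a c, μ {ω | X ω = a ∧ Y ω = c} = μ {ω | X ω = a} * μ {ω | Y ω = c})
    (E : Set (α × β)) {p : ℝ≥0∞} (hE : ∀ a, μ {ω | (a, Y ω) ∈ E} = p) :
    μ {ω | (X ω, Y ω) ∈ E} = p := by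
  classical
  have hX_total : ∑ a, μ {ω | X ω = a} = 1 := by
    simpa using (measure_mem_eq_sum_measure_fiber X hX Set.univ).symm
  simp only [measure_prod_mem_eq_sum_mul X Y hX hY hXY, hE, ← Finset.sum_mul, hX_total, one_mul]

end Independent

end MeasureTheory

theorem add_combined_hash_pairwise_independent_uniform_general
    {Ω : Type*} [MeasureSpace Ω] [IsProbabilityMeasure (ℙ : Measure Ω)]
    (n b : ℕ) (hb : 0 < b) (H1 H2 : Ω → Fin n → ZMod b)
    -- H1 and H2 are independent (as function-valued random variables):
    (hindep : ∀ f g : Fin n → ZMod b,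
      ℙ {ω | H1 ω = f ∧ H2 ω = g} = ℙ {ω | H1 ω = f} * ℙ {ω | H2 ω = g})
    -- H1 is a pairwise independent uniform family:
    (hH1unif : ∀ i u, ℙ {ω | H1 ω i = u} = 1 / (b : ℝ≥0∞))
    (hH1pair : ∀ i i', i ≠ i' → ∀ u v,
      ℙ {ω | H1 ω i = u ∧ H1 ω i' = v} = ℙ {ω | H1 ω i = u} * ℙ {ω | H1 ω i' = v})
    -- H2 is a pairwise independent uniform family:
    (hH2unif : ∀ j u, ℙ {ω | H2 ω j = u} = 1 / (b : ℝ≥0∞))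
    (hH2pair : ∀ j j', j ≠ j' → ∀ u v,
      ℙ {ω | H2 ω j = u ∧ H2 ω j' = v} = ℙ {ω | H2 ω j = u} * ℙ {ω | H2 ω j' = v}) :
    (∀ i j : Fin n, ∀ u : ZMod b,
      ℙ {ω | H1 ω i + H2 ω j = u} = 1 / (b : ℝ≥0∞)) ∧
    (∀ i j i' j' : Fin n, (i, j) ≠ (i', j') → ∀ u v : ZMod b,
      ℙ {ω | H1 ω i + H2 ω j = u ∧ H1 ω i' + H2 ω j' = v} = 1 / (b : ℝ≥0∞)^2) := by
  have : NeZero b := ⟨hb.ne'⟩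
  have hfiber {H : Ω → Fin n → ZMod b}
      (hunif : ∀ i u, ℙ {ω | H ω i = u} = 1 / (b : ℝ≥0∞)) (f : Fin n → ZMod b) :
      NullMeasurableSet {ω | H ω = f} ℙ :=
    nullMeasurableSet_fiber_of_forall_eval H (fun i =>
      nullMeasurableSet_fiber_of_measure_fiber_eq_inv_card _ fun u => by
        rw [ZMod.card]; exact hunif i u) f
  have hpair_eq {H : Ω → Fin n → ZMod b}
      (hunif : ∀ i u, ℙ {ω | H ω i = u} = 1 / (b : ℝ≥0∞))
      (hpair : ∀ i i', i ≠ i' → ∀ u v,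
        ℙ {ω | H ω i = u ∧ H ω i' = v} = ℙ {ω | H ω i = u} * ℙ {ω | H ω i' = v})
      {i i' : Fin n} (hi : i ≠ i') (u v : ZMod b) :
      ℙ {ω | H ω i = u ∧ H ω i' = v} = 1 / (b : ℝ≥0∞) ^ 2 := by
    rw [hpair i i' hi, hunif, hunif, one_div, one_div, ENNReal.inv_pow, sq]
  have hindep' (g f : Fin n → ZMod b) :
      ℙ {ω | H2 ω = g ∧ H1 ω = f} = ℙ {ω | H2 ω = g} * ℙ {ω | H1 ω = f} := by
    simp only [and_comm, mul_comm, hindep]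
  refine ⟨fun i j u => ?_, fun i j i' j' hne u v => ?_⟩
  · exact measure_prod_mem_eq_of_measure_section_eq H1 H2 (hfiber hH1unif) (hfiber hH2unif)
      hindep {p | p.1 i + p.2 j = u} fun f => by
        simpa only [Set.mem_ofPred_eq, ← eq_sub_iff_add_eq'] using hH2unif j (u - f i)
  rw [Ne, Prod.mk.injEq, not_and_or] at hne
  rcases hne with hi | hj
  · exact measure_prod_mem_eq_of_measure_section_eq H2 H1 (hfiber hH2unif) (hfiber hH1unif)
      hindep' {p | p.2 i + p.1 j = u ∧ p.2 i' + p.1 j' = v} fun g => by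
        simpa only [Set.mem_ofPred_eq, ← eq_sub_iff_add_eq] using
          hpair_eq hH1unif hH1pair hi (u - g j) (v - g j')
  · exact measure_prod_mem_eq_of_measure_section_eq H1 H2 (hfiber hH1unif) (hfiber hH2unif)
      hindep {p | p.1 i + p.2 j = u ∧ p.1 i' + p.2 j' = v} fun f => by
        simpa only [Set.mem_ofPred_eq, ← eq_sub_iff_add_eq'] using
          hpair_eq hH2unif hH2pair hj (u - f i) (v - f i')

/-- If `H1, H2 : Ω → (Fin n → ZMod b)` are independent random functions, each a
pairwise independent uniform family into `ZMod b`, then the combined random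
function `G(i,j) = H1(i) + H2(j)` (addition modulo `b`) is a pairwise independent
uniform family on `Fin n × Fin n`: each `G(i,j)` is uniform on `ZMod b`, and for
`(i,j) ≠ (i',j')` and any `u, v`, `Pr[G(i,j) = u ∧ G(i',j') = v] = 1/b²`. -/
theorem add_combined_hash_pairwise_independent_uniform
    {Ω : Type*} [MeasureSpace Ω] [IsProbabilityMeasure (ℙ : Measure Ω)]
    (n b : ℕ) (hn : 0 < n) (hb : 0 < b) (H1 H2 : Ω → Fin n → ZMod b)
    -- H1 and H2 are independent (as function-valued random variables):
    (hindep : ∀ f g : Fin n → ZMod b,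
      ℙ {ω | H1 ω = f ∧ H2 ω = g} = ℙ {ω | H1 ω = f} * ℙ {ω | H2 ω = g})
    -- H1 is a pairwise independent uniform family:
    (hH1unif : ∀ i u, ℙ {ω | H1 ω i = u} = 1 / (b : ℝ≥0∞))
    (hH1pair : ∀ i i', i ≠ i' → ∀ u v,
      ℙ {ω | H1 ω i = u ∧ H1 ω i' = v} = ℙ {ω | H1 ω i = u} * ℙ {ω | H1 ω i' = v})
    -- H2 is a pairwise independent uniform family:
    (hH2unif : ∀ j u, ℙ {ω | H2 ω j = u} = 1 / (b : ℝ≥0∞))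
    (hH2pair : ∀ j j', j ≠ j' → ∀ u v,
      ℙ {ω | H2 ω j = u ∧ H2 ω j' = v} = ℙ {ω | H2 ω j = u} * ℙ {ω | H2 ω j' = v}) :
    (∀ i j : Fin n, ∀ u : ZMod b,
      ℙ {ω | H1 ω i + H2 ω j = u} = 1 / (b : ℝ≥0∞)) ∧
    (∀ i j i' j' : Fin n, (i, j) ≠ (i', j') → ∀ u v : ZMod b,
      ℙ {ω | H1 ω i + H2 ω j = u ∧ H1 ω i' + H2 ω j' = v} = 1 / (b : ℝ≥0∞)^2) :=
  add_combined_hash_pairwise_independent_uniform_general n b hb H1 H2 hindep hH1unif hH1pair hH2unif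
    hH2pair
end

section
/- Let n be a positive natural number, b = 2^m, and A, B : Matrix (Fin n) (Fin n) ℝ with product C = A * B. Let h1, h2 : Fin n → Fin b and s1, s2 : Fin n → ℝ be arbitrary functions (with s1, s2 taking values in {-1,1}). For each κ ∈ Fin n define vectors pA^κ, pB^κ : Fin b → ℝ by pA^κ[k] = Σ_{i : h1(i) = k} s1(i) · A[i][κ] and pB^κ[k] = Σ_{j : h2(j) = k} s2(j) · B[κ][j]. Then for every k ∈ Fin b, Σ_{κ} (pA^κ *_⊕ pB^κ)[k] = Σ_{(i,j) : h1(i) XOR h2(j) = k} s1(i) · s2(j) · C[i][j]. That is, the compressed polynomial produced by the FWHT variant of Pagh's Compress routine accumulates each signed product entry s1(i)s2(j)·C[i][j] into exactly the coefficient indexed by h1(i) XOR h2(j). -/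
/-- Auxiliary: the XOR-convolution of the sketch polynomials for a fixed `κ`. -/
lemma xorConv_sketch (n m : ℕ)
    (A B : Matrix (Fin n) (Fin n) ℝ)
    (h1 h2 : Fin n → Fin (2^m)) (s1 s2 : Fin n → ℝ)
    (k : Fin (2^m)) (κ : Fin n) :
    xorConv
        (fun c => ∑ i ∈ Finset.univ.filter (fun i : Fin n => h1 i = c), s1 i * A i κ)
        (fun c => ∑ j ∈ Finset.univ.filter (fun j : Fin n => h2 j = c), s2 j * B κ j) k
    = ∑ p ∈ Finset.univ.filter (fun p : Fin n × Fin n => fxor (h1 p.1) (h2 p.2) = k),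
        (s1 p.1 * A p.1 κ) * (s2 p.2 * B κ p.2) := by
  unfold xorConv
  have step1 : ∀ p : Fin (2^m) × Fin (2^m),
      (∑ i ∈ Finset.univ.filter (fun i : Fin n => h1 i = p.1), s1 i * A i κ) *
      (∑ j ∈ Finset.univ.filter (fun j : Fin n => h2 j = p.2), s2 j * B κ j)
      = ∑ q ∈ Finset.univ.filter
          (fun q : Fin n × Fin n => (fun q : Fin n × Fin n => (h1 q.1, h2 q.2)) q = p),
          (s1 q.1 * A q.1 κ) * (s2 q.2 * B κ q.2) := by
    intro p
    rw [Finset.sum_mul_sum, ← Finset.sum_product']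
    refine Finset.sum_congr ?_ fun _ _ => rfl
    ext q
    simp [Prod.ext_iff, and_comm]
  simp only [step1]
  rw [Finset.sum_fiberwise_eq_sum_filter]
  congr 1
  ext q
  simp

/-- The compressed polynomial of the FWHT variant of Pagh's `Compress` routine:
summing, over the inner dimension `κ`, the XOR-convolutions of the per-column and
per-row sketch polynomials `pA^κ[k] = Σ_{h1(i)=k} s1(i)·A[i][κ]` and
`pB^κ[k] = Σ_{h2(j)=k} s2(j)·B[κ][j]` accumulates each signed product entry
`s1(i)·s2(j)·C[i][j]` of `C = A*B` into exactly the coefficient `h1(i) XOR h2(j)`. -/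
theorem compress_fwht_accumulates (n m : ℕ) (hn : 0 < n)
    (A B : Matrix (Fin n) (Fin n) ℝ)
    (h1 h2 : Fin n → Fin (2^m)) (s1 s2 : Fin n → ℝ)
    (hs1 : ∀ i, s1 i ∈ ({-1, 1} : Set ℝ)) (hs2 : ∀ j, s2 j ∈ ({-1, 1} : Set ℝ))
    (k : Fin (2^m)) :
    ∑ κ : Fin n,
      xorConv
        (fun c => ∑ i ∈ Finset.univ.filter (fun i : Fin n => h1 i = c), s1 i * A i κ)
        (fun c => ∑ j ∈ Finset.univ.filter (fun j : Fin n => h2 j = c), s2 j * B κ j) k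
      = ∑ p ∈ Finset.univ.filter (fun p : Fin n × Fin n => fxor (h1 p.1) (h2 p.2) = k),
          s1 p.1 * s2 p.2 * (A * B) p.1 p.2 := by
  simp only [xorConv_sketch n m A B h1 h2 s1 s2 k]
  rw [Finset.sum_comm]
  refine Finset.sum_congr rfl fun p _ => ?_
  rw [Matrix.mul_apply, Finset.mul_sum]
  exact Finset.sum_congr rfl fun κ _ => by ring
end

section
/- Let n be a positive natural number and b = 2^m. Let A, B : Matrix (Fin n) (Fin n) ℝ with C = A * B. Let H1, H2 : Ω → (Fin n → Fin b) and S1, S2 : Ω → (Fin n → ({-1,1} : Set ℝ)) be mutually independent random functions, where each of H1, H2 is a pairwise independent uniform family into Fin b and each of S1, S2 is a pairwise independent uniform family of random signs. Define the random sketch P[k] = Σ_{(i',j') : H1(i') XOR H2(j') = k} S1(i')·S2(j')·C[i'][j'] and the estimator X̃(i,j) = S1(i)·S2(j)·P[H1(i) XOR H2(j)]. Then for every (i, j), E[X̃(i,j)] = C[i][j]; the FWHT-based compressed matrix multiplication estimator is unbiased. -/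
open MeasureTheory
open scoped ENNReal ProbabilityTheory

/-- The FWHT compressed-product sketch of a matrix `C` under hash functions
`h1, h2` and sign functions `s1, s2`:
`p[k] = Σ_{h1(i') ⊕ h2(j') = k} s1(i')·s2(j')·C[i'][j']`. -/
def sketch {n m : ℕ} (C : Matrix (Fin n) (Fin n) ℝ)
    (h1 h2 : Fin n → Fin (2^m)) (s1 s2 : Fin n → ℝ) : Fin (2^m) → ℝ :=
  fun k => ∑ p ∈ Finset.univ.filter
      (fun p : Fin n × Fin n => fxor (h1 p.1) (h2 p.2) = k),
    s1 p.1 * s2 p.2 * C p.1 p.2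

/-- The decompressed estimate of entry `(i,j)`:
`s1(i)·s2(j)·p[h1(i) ⊕ h2(j)]`. -/
def estimate {n m : ℕ} (C : Matrix (Fin n) (Fin n) ℝ)
    (h1 h2 : Fin n → Fin (2^m)) (s1 s2 : Fin n → ℝ) (i j : Fin n) : ℝ :=
  s1 i * s2 j * sketch C h1 h2 s1 s2 (fxor (h1 i) (h2 j))

/-!
Expanding the sketch, the estimate of entry `(i, j)` is
`∑ (a, b), C a b · [h₁ a ⊕ h₂ b = h₁ i ⊕ h₂ j] · (s₁ i s₁ a) · (s₂ j s₂ b)`.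
Because the hashes and the two sign families are independent, the expectation of each term
factors, and `E[s i · s a] = [i = a]` for pairwise independent uniform signs. Hence only the
term `(a, b) = (i, j)` survives, and there the collision indicator is identically `1`.
-/

open Finset

theorem estimate_eq_sum {n m : ℕ} (C : Matrix (Fin n) (Fin n) ℝ) (h₁ h₂ : Fin n → Fin (2 ^ m))
    (s₁ s₂ : Fin n → ℝ) (i j : Fin n) :
    estimate C h₁ h₂ s₁ s₂ i j = ∑ p : Fin n × Fin n, C p.1 p.2 *
      ((if fxor (h₁ p.1) (h₂ p.2) = fxor (h₁ i) (h₂ j) then 1 else 0) *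
        ((s₁ i * s₁ p.1) * (s₂ j * s₂ p.2))) := by
  simp only [estimate, sketch, sum_filter, mul_sum]
  refine sum_congr rfl fun p _ => ?_
  split_ifs <;> ring

section

variable {Ω : Type*} [MeasurableSpace Ω] {μ : Measure Ω}

theorem map_eq_prod_prod_of_measure_eq_mul {α₁ α₂ α₃ α₄ : Type*}
    [MeasurableSpace α₁] [MeasurableSpace α₂] [MeasurableSpace α₃] [MeasurableSpace α₄]
    [Countable α₁] [Countable α₂] [Countable α₃] [Countable α₄]
    [MeasurableSingletonClass α₁] [MeasurableSingletonClass α₂]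
    [MeasurableSingletonClass α₃] [MeasurableSingletonClass α₄]
    {X₁ : Ω → α₁} {X₂ : Ω → α₂} {X₃ : Ω → α₃} {X₄ : Ω → α₄}
    (hX₁ : Measurable X₁) (hX₂ : Measurable X₂) (hX₃ : Measurable X₃) (hX₄ : Measurable X₄)
    (h : ∀ x₁ x₂ x₃ x₄, μ {ω | X₁ ω = x₁ ∧ X₂ ω = x₂ ∧ X₃ ω = x₃ ∧ X₄ ω = x₄}
      = μ {ω | X₁ ω = x₁} * μ {ω | X₂ ω = x₂} * μ {ω | X₃ ω = x₃} * μ {ω | X₄ ω = x₄}) :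
    μ.map (fun ω => ((X₁ ω, X₂ ω), X₃ ω, X₄ ω))
      = ((μ.map X₁).prod (μ.map X₂)).prod ((μ.map X₃).prod (μ.map X₄)) := by
  refine Measure.ext_of_singleton fun ⟨⟨x₁, x₂⟩, x₃, x₄⟩ => ?_
  simp only [← Set.singleton_prod_singleton, Measure.prod_prod]
  rw [Measure.map_apply (by fun_prop) (.of_discrete), Measure.map_apply hX₁ (.singleton _),
    Measure.map_apply hX₂ (.singleton _), Measure.map_apply hX₃ (.singleton _),
    Measure.map_apply hX₄ (.singleton _)]
  convert h x₁ x₂ x₃ x₄ using 1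
  · congr 1
    ext ω
    simp [and_assoc]
  · simp only [Set.preimage, Set.mem_singleton_iff, mul_assoc]

theorem integral_mul_eq_zero_of_signs [IsFiniteMeasure μ] {X Y : Ω → ℝ}
    (hX : Measurable X) (hY : Measurable Y)
    (hXval : ∀ ω, X ω ∈ ({-1, 1} : Set ℝ)) (hYval : ∀ ω, Y ω ∈ ({-1, 1} : Set ℝ))
    (hXunif : ∀ u ∈ ({-1, 1} : Set ℝ), μ {ω | X ω = u} = 1 / 2)
    (hXY : ∀ u v : ℝ, μ {ω | X ω = u ∧ Y ω = v} = μ {ω | X ω = u} * μ {ω | Y ω = v}) :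
    ∫ ω, X ω * Y ω ∂μ = 0 := by
  have hexpand : ∀ ω, X ω * Y ω = ∑ u ∈ ({-1, 1} : Finset ℝ), ∑ v ∈ ({-1, 1} : Finset ℝ),
      u * v * {ω | X ω = u ∧ Y ω = v}.indicator 1 ω := by
    intro ω
    obtain hx | hx : X ω = -1 ∨ X ω = 1 := hXval ω <;>
    obtain hy | hy : Y ω = -1 ∨ Y ω = 1 := hYval ω <;>
    norm_num [sum_pair, Set.indicator, hx, hy]
  have hmeas : ∀ u v : ℝ, MeasurableSet {ω | X ω = u ∧ Y ω = v} := fun u v =>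
    (measurableSet_eq_fun hX measurable_const).inter (measurableSet_eq_fun hY measurable_const)
  simp_rw [hexpand]
  rw [integral_finsetSum _ fun u _ => integrable_finsetSum _ fun v _ =>
    ((integrable_const 1).indicator (hmeas u v)).const_mul _]
  have hterm : ∀ u : ℝ, ∫ ω, ∑ v ∈ ({-1, 1} : Finset ℝ),
      u * v * {ω | X ω = u ∧ Y ω = v}.indicator 1 ω ∂μ
        = ∑ v ∈ ({-1, 1} : Finset ℝ),
            u * v * ((μ {ω | X ω = u}).toReal * (μ {ω | Y ω = v}).toReal) := by
    intro u
    rw [integral_finsetSum _ fun v _ => ((integrable_const 1).indicator (hmeas u v)).const_mul _]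
    refine sum_congr rfl fun v _ => ?_
    rw [integral_const_mul, integral_indicator_one (hmeas u v), measureReal_def, hXY,
      ENNReal.toReal_mul]
  have hne : (-1 : ℝ) ≠ 1 := by norm_num
  rw [sum_congr rfl fun u _ => hterm u]
  simp only [sum_pair hne, hXunif (-1) (by simp), hXunif 1 (by simp)]
  ring

theorem integral_mul_eq_ite_of_pairwise_signs [IsProbabilityMeasure μ] {ι : Type*}
    [DecidableEq ι] {S : Ω → ι → ℝ} (hS : Measurable S) (hval : ∀ ω k, S ω k ∈ ({-1, 1} : Set ℝ))
    (hunif : ∀ k, ∀ u ∈ ({-1, 1} : Set ℝ), μ {ω | S ω k = u} = 1 / 2)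
    (hpair : ∀ k k', k ≠ k' → ∀ u v : ℝ,
      μ {ω | S ω k = u ∧ S ω k' = v} = μ {ω | S ω k = u} * μ {ω | S ω k' = v})
    (k k' : ι) :
    ∫ ω, S ω k * S ω k' ∂μ = if k = k' then 1 else 0 := by
  split_ifs with h
  · subst h
    have hsq : ∀ ω, S ω k * S ω k = 1 := fun ω => by
      obtain hs | hs : S ω k = -1 ∨ S ω k = 1 := hval ω k <;> norm_num [hs]
    simp [hsq]
  · exact integral_mul_eq_zero_of_signs hS.eval hS.eval (hval · k) (hval · k') (hunif k)
      (hpair k k' h)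

end

theorem integral_estimate_prod_of_sign_moments {n m : ℕ} (C : Matrix (Fin n) (Fin n) ℝ)
    (μ : Measure ((Fin n → Fin (2 ^ m)) × (Fin n → Fin (2 ^ m)))) [IsProbabilityMeasure μ]
    (ν₁ ν₂ : Measure (Fin n → ({-1, 1} : Set ℝ))) [IsFiniteMeasure ν₁] [IsFiniteMeasure ν₂]
    (i j : Fin n) (hν₁ : ∀ a, ∫ t, (t i : ℝ) * t a ∂ν₁ = if i = a then 1 else 0)
    (hν₂ : ∀ b, ∫ t, (t j : ℝ) * t b ∂ν₂ = if j = b then 1 else 0) :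
    ∫ x, estimate C x.1.1 x.1.2 (fun k => x.2.1 k) (fun k => x.2.2 k) i j ∂μ.prod (ν₁.prod ν₂)
      = C i j := by
  calc
    _ = ∑ p : Fin n × Fin n, C p.1 p.2 *
          ((∫ h, (if fxor (h.1 p.1) (h.2 p.2) = fxor (h.1 i) (h.2 j) then 1 else 0) ∂μ) *
            ((∫ t, (t i : ℝ) * t p.1 ∂ν₁) * ∫ t, (t j : ℝ) * t p.2 ∂ν₂)) := by
      simp only [estimate_eq_sum]
      rw [integral_finsetSum _ fun p _ => Integrable.of_finite]
      refine sum_congr rfl fun p _ => ?_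
      rw [integral_const_mul, ← integral_prod_mul, ← integral_prod_mul]
    _ = C i j := by
      simp [hν₁, hν₂, Fintype.sum_prod_type]

theorem compressed_mm_fwht_unbiased_general
    {Ω : Type*} [MeasureSpace Ω] [IsProbabilityMeasure (ℙ : Measure Ω)]
    (n m : ℕ)
    (C : Matrix (Fin n) (Fin n) ℝ)
    (H1 H2 : Ω → Fin n → Fin (2^m)) (S1 S2 : Ω → Fin n → ℝ)
    (hmH1 : Measurable H1) (hmH2 : Measurable H2)
    (hmS1 : Measurable S1) (hmS2 : Measurable S2)
    -- the four random functions are mutually independent: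
    (hindep : ∀ (f1 f2 : Fin n → Fin (2^m)) (g1 g2 : Fin n → ℝ),
      ℙ {ω | H1 ω = f1 ∧ H2 ω = f2 ∧ S1 ω = g1 ∧ S2 ω = g2}
        = ℙ {ω | H1 ω = f1} * ℙ {ω | H2 ω = f2} * ℙ {ω | S1 ω = g1} * ℙ {ω | S2 ω = g2})
    -- S1 and S2 are pairwise independent uniform families of random signs:
    (hS1val : ∀ ω i, S1 ω i ∈ ({-1, 1} : Set ℝ))
    (hS2val : ∀ ω j, S2 ω j ∈ ({-1, 1} : Set ℝ))
    (hS1unif : ∀ i, ∀ u ∈ ({-1, 1} : Set ℝ), ℙ {ω | S1 ω i = u} = 1 / 2)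
    (hS1pair : ∀ i i', i ≠ i' → ∀ u v : ℝ,
      ℙ {ω | S1 ω i = u ∧ S1 ω i' = v} = ℙ {ω | S1 ω i = u} * ℙ {ω | S1 ω i' = v})
    (hS2unif : ∀ j, ∀ u ∈ ({-1, 1} : Set ℝ), ℙ {ω | S2 ω j = u} = 1 / 2)
    (hS2pair : ∀ j j', j ≠ j' → ∀ u v : ℝ,
      ℙ {ω | S2 ω j = u ∧ S2 ω j' = v} = ℙ {ω | S2 ω j = u} * ℙ {ω | S2 ω j' = v})
    (i j : Fin n) :
    ∫ ω, estimate C (H1 ω) (H2 ω) (S1 ω) (S2 ω) i j ∂ℙ = C i j := by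
  -- Viewed as `{-1, 1}`-valued, the signs have a joint law with the hashes on a finite type.
  let T₁ : Ω → Fin n → ({-1, 1} : Set ℝ) := fun ω k => ⟨S1 ω k, hS1val ω k⟩
  let T₂ : Ω → Fin n → ({-1, 1} : Set ℝ) := fun ω k => ⟨S2 ω k, hS2val ω k⟩
  have hT₁ : Measurable T₁ := measurable_pi_lambda _ fun k => hmS1.eval.subtype_mk
  have hT₂ : Measurable T₂ := measurable_pi_lambda _ fun k => hmS2.eval.subtype_mk
  have hlaw := map_eq_prod_prod_of_measure_eq_mul hmH1 hmH2 hT₁ hT₂ fun f₁ f₂ t₁ t₂ => by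
    simpa [T₁, T₂, funext_iff, Subtype.ext_iff] using
      hindep f₁ f₂ (fun k => t₁ k) (fun k => t₂ k)
  have hsign₁ : ∀ a, ∫ t, (t i : ℝ) * t a ∂(Measure.map T₁ ℙ) = if i = a then 1 else 0 :=
    fun a => by
      rw [integral_map hT₁.aemeasurable Measurable.of_discrete.aestronglyMeasurable]
      exact integral_mul_eq_ite_of_pairwise_signs hmS1 hS1val hS1unif hS1pair i a
  have hsign₂ : ∀ b, ∫ t, (t j : ℝ) * t b ∂(Measure.map T₂ ℙ) = if j = b then 1 else 0 :=
    fun b => by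
      rw [integral_map hT₂.aemeasurable Measurable.of_discrete.aestronglyMeasurable]
      exact integral_mul_eq_ite_of_pairwise_signs hmS2 hS2val hS2unif hS2pair j b
  have := Measure.isProbabilityMeasure_map (μ := ℙ) hmH1.aemeasurable
  have := Measure.isProbabilityMeasure_map (μ := ℙ) hmH2.aemeasurable
  rw [← integral_estimate_prod_of_sign_moments C
    ((Measure.map H1 ℙ).prod (Measure.map H2 ℙ)) _ _ i j hsign₁ hsign₂, ← hlaw,
    integral_map ((hmH1.prodMk hmH2).prodMk (hT₁.prodMk hT₂)).aemeasurable
      (measurable_of_countable _).aestronglyMeasurable]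

/-- The FWHT-based compressed matrix multiplication estimator is unbiased:
`E[X̃(i,j)] = C[i][j]` for every entry `(i,j)` of `C = A * B`. -/
theorem compressed_mm_fwht_unbiased
    {Ω : Type*} [MeasureSpace Ω] [IsProbabilityMeasure (ℙ : Measure Ω)]
    (n m : ℕ) (hn : 0 < n)
    (A B C : Matrix (Fin n) (Fin n) ℝ) (hC : C = A * B)
    (H1 H2 : Ω → Fin n → Fin (2^m)) (S1 S2 : Ω → Fin n → ℝ)
    (hmH1 : Measurable H1) (hmH2 : Measurable H2)
    (hmS1 : Measurable S1) (hmS2 : Measurable S2)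
    -- the four random functions are mutually independent:
    (hindep : ∀ (f1 f2 : Fin n → Fin (2^m)) (g1 g2 : Fin n → ℝ),
      ℙ {ω | H1 ω = f1 ∧ H2 ω = f2 ∧ S1 ω = g1 ∧ S2 ω = g2}
        = ℙ {ω | H1 ω = f1} * ℙ {ω | H2 ω = f2} * ℙ {ω | S1 ω = g1} * ℙ {ω | S2 ω = g2})
    -- H1 and H2 are pairwise independent uniform families into Fin (2^m):
    (hH1unif : ∀ i u, ℙ {ω | H1 ω i = u} = 1 / (2^m : ℝ≥0∞))
    (hH1pair : ∀ i i', i ≠ i' → ∀ u v,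
      ℙ {ω | H1 ω i = u ∧ H1 ω i' = v} = ℙ {ω | H1 ω i = u} * ℙ {ω | H1 ω i' = v})
    (hH2unif : ∀ j u, ℙ {ω | H2 ω j = u} = 1 / (2^m : ℝ≥0∞))
    (hH2pair : ∀ j j', j ≠ j' → ∀ u v,
      ℙ {ω | H2 ω j = u ∧ H2 ω j' = v} = ℙ {ω | H2 ω j = u} * ℙ {ω | H2 ω j' = v})
    -- S1 and S2 are pairwise independent uniform families of random signs:
    (hS1val : ∀ ω i, S1 ω i ∈ ({-1, 1} : Set ℝ))
    (hS2val : ∀ ω j, S2 ω j ∈ ({-1, 1} : Set ℝ))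
    (hS1unif : ∀ i, ∀ u ∈ ({-1, 1} : Set ℝ), ℙ {ω | S1 ω i = u} = 1 / 2)
    (hS1pair : ∀ i i', i ≠ i' → ∀ u v : ℝ,
      ℙ {ω | S1 ω i = u ∧ S1 ω i' = v} = ℙ {ω | S1 ω i = u} * ℙ {ω | S1 ω i' = v})
    (hS2unif : ∀ j, ∀ u ∈ ({-1, 1} : Set ℝ), ℙ {ω | S2 ω j = u} = 1 / 2)
    (hS2pair : ∀ j j', j ≠ j' → ∀ u v : ℝ,
      ℙ {ω | S2 ω j = u ∧ S2 ω j' = v} = ℙ {ω | S2 ω j = u} * ℙ {ω | S2 ω j' = v})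
    (i j : Fin n) :
    ∫ ω, estimate C (H1 ω) (H2 ω) (S1 ω) (S2 ω) i j ∂ℙ = C i j :=
  compressed_mm_fwht_unbiased_general n m C H1 H2 S1 S2 hmH1 hmH2 hmS1 hmS2 hindep hS1val hS2val
    hS1unif hS1pair hS2unif hS2pair i j
end

section
/- Under the hypotheses of the FWHT compressed matrix multiplication setup — n ≥ 1, b = 2^m, C = A * B for A, B : Matrix (Fin n) (Fin n) ℝ, mutually independent H1, H2 : Ω → (Fin n → Fin b) and S1, S2 : Ω → (Fin n → {-1,1}), each of H1, H2 a pairwise independent uniform family and each of S1, S2 a pairwise independent uniform family of random signs, with estimator X̃(i,j) = S1(i)·S2(j)·P[H1(i) XOR H2(j)] where P[k] = Σ_{(i',j') : H1(i') XOR H2(j') = k} S1(i')·S2(j')·C[i'][j'] — for every (i,j) and every real t > 0, Pr[|X̃(i,j) − C[i][j]| ≥ t] ≤ ‖C‖_F² / (b · t²). -/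
open MeasureTheory
open scoped ENNReal ProbabilityTheory

/-!
Up to the sign `s1(i)·s2(j)`, the error of the estimate of `C[i][j]` is
`Σ_{p ≠ (i,j)} C[p]·W_p`, where `W_p = s1(p.1)·s2(p.2)` if `p` collides with `(i,j)`, i.e.
`h1(p.1) ⊕ h2(p.2) = h1(i) ⊕ h2(j)`, and `W_p = 0` otherwise. The signs are independent of the
hashes and have pairwise uncorrelated coordinates, so the `W_p` are orthogonal and
`E[W_p²] = Pr[p collides with (i,j)]`. That probability is `1/b`: if `p.1 ≠ i`, then
`h1(p.1) ⊕ h1(i)` is uniform by pairwise uniformity of `h1`, and it is independent of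
`h2(j) ⊕ h2(p.2)`; if `p.1 = i`, then `p.2 ≠ j` and the collision is `h2(p.2) = h2(j)`.
Hence `E[error²] ≤ ‖C‖_F² / b`, and Markov's inequality for `error²` gives the bound.
-/

open Finset ProbabilityTheory

theorem comp_eq_sum_indicator {Ω α : Type*} {X : Ω → α} {s : Finset α} (hs : ∀ ω, X ω ∈ s)
    (F : α → ℝ) (ω : Ω) :
    F (X ω) = ∑ a ∈ s, (X ⁻¹' {a}).indicator (fun _ => F a) ω := by
  classical
  simp [Set.indicator_apply, hs ω]

section FiniteRange

variable {Ω α β : Type*} [MeasurableSpace Ω] [MeasurableSpace α] [MeasurableSingletonClass α]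
  {μ : Measure Ω} {X : Ω → α} {s : Finset α}

theorem measure_setOf_eq_sum_preimage_singleton (hX : Measurable X) (hs : ∀ ω, X ω ∈ s)
    (P : α → Prop) [DecidablePred P] :
    μ {ω | P (X ω)} = ∑ a ∈ s with P a, μ (X ⁻¹' {a}) := by
  rw [sum_measure_preimage_singleton _ fun a _ => hX (measurableSet_singleton a)]
  congr 1
  ext ω
  simp [hs ω]

theorem integrable_comp_of_mem_finset [IsFiniteMeasure μ] (hX : Measurable X)
    (hs : ∀ ω, X ω ∈ s) (F : α → ℝ) : Integrable (fun ω => F (X ω)) μ := by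
  simp_rw [comp_eq_sum_indicator hs F]
  exact integrable_finsetSum _ fun a _ =>
    (integrable_const (F a)).indicator (hX (measurableSet_singleton a))

theorem integral_comp_eq_sum [IsFiniteMeasure μ] (hX : Measurable X) (hs : ∀ ω, X ω ∈ s)
    (F : α → ℝ) : ∫ ω, F (X ω) ∂μ = ∑ a ∈ s, μ.real (X ⁻¹' {a}) * F a := by
  simp_rw [comp_eq_sum_indicator hs F]
  rw [integral_finsetSum _ fun a _ =>
    (integrable_const (F a)).indicator (hX (measurableSet_singleton a))]
  refine sum_congr rfl fun a _ => ?_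
  rw [integral_indicator_const _ (hX (measurableSet_singleton a)), smul_eq_mul]

theorem indepFun_of_measure_eq_mul [IsProbabilityMeasure μ] [MeasurableSpace β]
    [MeasurableSingletonClass β] {Y : Ω → β} {t : Finset β} (hX : Measurable X)
    (hY : Measurable Y) (hs : ∀ ω, X ω ∈ s) (ht : ∀ ω, Y ω ∈ t) (p : α → ℝ≥0∞) (q : β → ℝ≥0∞)
    (h : ∀ a b, μ {ω | X ω = a ∧ Y ω = b} = p a * q b) : X ⟂ᵢ[μ] Y := by
  classical
  have key : ∀ A B, μ (X ⁻¹' A ∩ Y ⁻¹' B)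
      = (∑ a ∈ s with a ∈ A, p a) * ∑ b ∈ t with b ∈ B, q b := by
    intro A B
    rw [sum_mul_sum, ← sum_product', ← filter_product]
    refine (measure_setOf_eq_sum_preimage_singleton (hX.prodMk hY)
      (fun ω => mem_product.2 ⟨hs ω, ht ω⟩) (fun c => c.1 ∈ A ∧ c.2 ∈ B)).trans ?_
    refine sum_congr rfl fun c _ => ?_
    rw [← h]
    congr 1
    ext ω
    simp [Prod.ext_iff]
  have hone : (∑ a ∈ s, p a) * ∑ b ∈ t, q b = 1 := by simpa using (key Set.univ Set.univ).symm
  rw [indepFun_iff_measure_inter_preimage_eq_mul]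
  intro A B _ _
  calc μ (X ⁻¹' A ∩ Y ⁻¹' B)
      = (∑ a ∈ s with a ∈ A, p a) * (∑ b ∈ t with b ∈ B, q b)
        * ((∑ a ∈ s, p a) * ∑ b ∈ t, q b) := by rw [key, hone, mul_one]
    _ = μ (X ⁻¹' A ∩ Y ⁻¹' Set.univ) * μ (X ⁻¹' Set.univ ∩ Y ⁻¹' B) := by
        simp only [key, Set.mem_univ, filter_true]; ring
    _ = μ (X ⁻¹' A) * μ (Y ⁻¹' B) := by simp

-- The independences needed to factor `E[Φ(X1, X2) · ψ(Y1) · ξ(Y2)]`.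
theorem indepFun_of_measure_eq_mul₄ [IsProbabilityMeasure μ] [Fintype α] [MeasurableSpace β]
    [MeasurableSingletonClass β] {t : Finset β}
    {X1 X2 : Ω → α} {Y1 Y2 : Ω → β} (hX1 : Measurable X1) (hX2 : Measurable X2)
    (hY1 : Measurable Y1) (hY2 : Measurable Y2) (hY1t : ∀ ω, Y1 ω ∈ t) (hY2t : ∀ ω, Y2 ω ∈ t)
    (h : ∀ a1 a2 b1 b2, μ {ω | X1 ω = a1 ∧ X2 ω = a2 ∧ Y1 ω = b1 ∧ Y2 ω = b2}
      = μ {ω | X1 ω = a1} * μ {ω | X2 ω = a2} * μ {ω | Y1 ω = b1} * μ {ω | Y2 ω = b2}) :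
    X1 ⟂ᵢ[μ] X2 ∧ (Y1 ⟂ᵢ[μ] fun ω => ((X1 ω, X2 ω), Y2 ω))
      ∧ Y2 ⟂ᵢ[μ] fun ω => ((X1 ω, X2 ω), Y1 ω) := by
  refine ⟨?_, ?_, ?_⟩
  · refine (indepFun_of_measure_eq_mul (s := univ) (t := univ ×ˢ t ×ˢ t)
      (Y := fun ω => (X2 ω, Y1 ω, Y2 ω)) hX1 (by fun_prop)
      (fun _ => mem_univ _) (fun ω => by simp [hY1t ω, hY2t ω]) (fun a => μ {ω | X1 ω = a})
      (fun b => μ {ω | X2 ω = b.1} * μ {ω | Y1 ω = b.2.1} * μ {ω | Y2 ω = b.2.2})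
      fun a b => by simpa [Prod.ext_iff, mul_assoc] using h a b.1 b.2.1 b.2.2).comp
      measurable_id measurable_fst
  · refine indepFun_of_measure_eq_mul (s := t) (t := univ ×ˢ t) hY1 (by fun_prop) hY1t
      (fun ω => by simp [hY2t ω]) (fun b => μ {ω | Y1 ω = b})
      (fun c => μ {ω | X1 ω = c.1.1} * μ {ω | X2 ω = c.1.2} * μ {ω | Y2 ω = c.2})
      fun b c => ?_
    rw [mul_comm, mul_right_comm _ (μ {ω | Y2 ω = c.2}), ← h]
    congr 1 with ω
    simp only [Set.mem_ofPred_eq, Prod.ext_iff]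
    tauto
  · refine indepFun_of_measure_eq_mul (s := t) (t := univ ×ˢ t) hY2 (by fun_prop) hY2t
      (fun ω => by simp [hY1t ω]) (fun b => μ {ω | Y2 ω = b})
      (fun c => μ {ω | X1 ω = c.1.1} * μ {ω | X2 ω = c.1.2} * μ {ω | Y1 ω = c.2})
      fun b c => ?_
    rw [mul_comm, ← h]
    congr 1 with ω
    simp only [Set.mem_ofPred_eq, Prod.ext_iff]
    tauto

end FiniteRange

section Moments

variable {Ω : Type*} [MeasurableSpace Ω] {μ : Measure Ω}

theorem measure_le_abs_le_ofReal_integral_sq_div [IsFiniteMeasure μ] {Y : Ω → ℝ}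
    (hY : Integrable (fun ω => Y ω ^ 2) μ) {t : ℝ} (ht : 0 < t) :
    μ {ω | t ≤ |Y ω|} ≤ ENNReal.ofReal ((∫ ω, Y ω ^ 2 ∂μ) / t ^ 2) := by
  have hset : {ω | t ≤ |Y ω|} = {ω | t ^ 2 ≤ Y ω ^ 2} := by
    ext ω
    simp only [Set.mem_ofPred_eq, ← sq_abs (Y ω)]
    exact (pow_le_pow_iff_left₀ ht.le (abs_nonneg _) two_ne_zero).symm
  rw [hset, ← ofReal_measureReal]
  refine ENNReal.ofReal_le_ofReal ((le_div_iff₀ (by positivity)).2 ?_)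
  rw [mul_comm]
  exact mul_meas_ge_le_integral_of_nonneg (.of_forall fun ω => sq_nonneg _) hY _

theorem integral_sq_sum_of_orthogonal {ι : Type*} (s : Finset ι) (c : ι → ℝ) (Z : ι → Ω → ℝ)
    (hint : ∀ p ∈ s, ∀ q ∈ s, Integrable (fun ω => Z p ω * Z q ω) μ)
    (horth : ∀ p ∈ s, ∀ q ∈ s, p ≠ q → ∫ ω, Z p ω * Z q ω ∂μ = 0) :
    ∫ ω, (∑ p ∈ s, c p * Z p ω) ^ 2 ∂μ = ∑ p ∈ s, c p ^ 2 * ∫ ω, Z p ω ^ 2 ∂μ := by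
  have hexpand : ∀ ω, (∑ p ∈ s, c p * Z p ω) ^ 2
      = ∑ p ∈ s, ∑ q ∈ s, c p * c q * (Z p ω * Z q ω) := fun ω => by
    rw [sq, sum_mul_sum]
    exact sum_congr rfl fun p _ => sum_congr rfl fun q _ => by ring
  simp_rw [hexpand]
  rw [integral_finsetSum _ fun p hp =>
    integrable_finsetSum _ fun q hq => (hint p hp q hq).const_mul _]
  refine sum_congr rfl fun p hp => ?_
  rw [integral_finsetSum _ fun q hq => (hint p hp q hq).const_mul _,
    sum_eq_single_of_mem p hp fun q hq hqp => by
      rw [integral_const_mul, horth p hp q hq hqp.symm, mul_zero],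
    integral_const_mul]
  simp_rw [sq]

theorem integral_mul_mul_of_indepFun {α β γ : Type*} [MeasurableSpace α] [MeasurableSpace β]
    [MeasurableSpace γ] {X : Ω → α} {Y : Ω → β} {Z : Ω → γ}
    (hX : Measurable X) (hY : Measurable Y) (hZ : Measurable Z)
    (hYXZ : Y ⟂ᵢ[μ] fun ω => (X ω, Z ω)) (hZXY : Z ⟂ᵢ[μ] fun ω => (X ω, Y ω))
    {f : α → ℝ} {g : β → ℝ} {h : γ → ℝ} (hf : Measurable f) (hg : Measurable g)
    (hh : Measurable h) :
    ∫ ω, f (X ω) * g (Y ω) * h (Z ω) ∂μ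
      = (∫ ω, f (X ω) ∂μ) * (∫ ω, g (Y ω) ∂μ) * ∫ ω, h (Z ω) ∂μ := by
  have hZX : Z ⟂ᵢ[μ] X := hZXY.comp measurable_id measurable_fst
  calc ∫ ω, f (X ω) * g (Y ω) * h (Z ω) ∂μ
      = ∫ ω, g (Y ω) * (fun x : α × γ => f x.1 * h x.2) (X ω, Z ω) ∂μ := by
        congr 1 with ω; ring
    _ = (∫ ω, g (Y ω) ∂μ) * ∫ ω, h (Z ω) * f (X ω) ∂μ := by
        have hfh : Measurable fun x : α × γ => f x.1 * h x.2 := by fun_prop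
        rw [hYXZ.integral_fun_comp_mul_comp hY.aemeasurable (hX.prodMk hZ).aemeasurable
          hg.aestronglyMeasurable hfh.aestronglyMeasurable]
        simp_rw [mul_comm (f _)]
    _ = _ := by
        rw [hZX.integral_fun_comp_mul_comp hZ.aemeasurable hX.aemeasurable
          hh.aestronglyMeasurable hf.aestronglyMeasurable]
        ring

variable [IsProbabilityMeasure μ]

theorem abs_eq_one_of_mem_sign {x : ℝ} (hx : x ∈ ({-1, 1} : Set ℝ)) : |x| = 1 := by
  simpa [abs_eq zero_le_one, or_comm] using hx

theorem mem_piFinset_of_mem_sign {ι : Type*} [Fintype ι] [DecidableEq ι] {g : ι → ℝ}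
    (hg : ∀ k, g k ∈ ({-1, 1} : Set ℝ)) :
    g ∈ Fintype.piFinset fun _ => ({-1, 1} : Finset ℝ) := by
  simpa [Fintype.mem_piFinset] using hg

theorem integral_mul_eq_ite_of_sign {ι : Type*} [DecidableEq ι] {S : Ω → ι → ℝ} (hS : Measurable S)
    (hval : ∀ ω k, S ω k ∈ ({-1, 1} : Set ℝ))
    (hunif : ∀ k, ∀ u ∈ ({-1, 1} : Set ℝ), μ {ω | S ω k = u} = 1 / 2)
    (hpair : ∀ k k', k ≠ k' → ∀ u v : ℝ,
      μ {ω | S ω k = u ∧ S ω k' = v} = μ {ω | S ω k = u} * μ {ω | S ω k' = v})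
    (a a' : ι) : ∫ ω, S ω a * S ω a' ∂μ = if a = a' then 1 else 0 := by
  have hsign : ∀ ω k, S ω k = -1 ∨ S ω k = 1 := by simpa using hval
  split_ifs with h
  · subst h
    have hsq : ∀ ω, S ω a * S ω a = 1 := fun ω => by
      rw [← abs_mul_abs_self, abs_eq_one_of_mem_sign (hval ω a), one_mul]
    simp [hsq]
  · have hquarter : ∀ u ∈ ({-1, 1} : Finset ℝ), ∀ v ∈ ({-1, 1} : Finset ℝ),
        μ.real ((fun ω => (S ω a, S ω a')) ⁻¹' {(u, v)}) = 1 / 4 := by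
      intro u hu v hv
      have hset : (fun ω => (S ω a, S ω a')) ⁻¹' {(u, v)} = {ω | S ω a = u ∧ S ω a' = v} := by
        ext ω; simp
      rw [hset, measureReal_def, hpair a a' h, hunif a u (by simpa using hu),
        hunif a' v (by simpa using hv)]
      norm_num [ENNReal.toReal_mul]
    rw [integral_comp_eq_sum (X := fun ω => (S ω a, S ω a')) (s := {-1, 1} ×ˢ {-1, 1})
      (F := fun x => x.1 * x.2) (by fun_prop) fun ω => by simpa using ⟨hsign ω a, hsign ω a'⟩,
      sum_product]
    rw [sum_congr rfl fun u hu => sum_congr rfl fun v hv => by rw [hquarter u hu v hv]]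
    norm_num

end Moments

theorem fxor_right_inj {m : ℕ} {a b c : Fin (2^m)} : fxor a b = fxor a c ↔ b = c := by
  simp [fxor, Fin.ext_iff, Nat.xor_right_inj]

theorem fxor_eq_iff_eq_fxor {m : ℕ} {a b k : Fin (2^m)} : fxor a b = k ↔ b = fxor a k := by
  simp only [fxor, Fin.ext_iff]
  rw [← Nat.xor_right_inj (x := a.val), Nat.xor_xor_cancel_left]

theorem fxor_eq_fxor_iff {m : ℕ} {a b c d : Fin (2^m)} :
    fxor a b = fxor c d ↔ fxor a c = fxor d b := by
  simp only [fxor, Fin.ext_iff]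
  constructor <;> intro h <;>
    simpa [Nat.xor_assoc, Nat.xor_comm, Nat.xor_left_comm]
      using congrArg (· ^^^ (b.val ^^^ c.val)) h

theorem measurable_fxor {m : ℕ} : Measurable fun x : Fin (2^m) × Fin (2^m) => fxor x.1 x.2 :=
  .of_discrete

section Hashing

variable {Ω ι : Type*} [MeasurableSpace Ω] {μ : Measure Ω} [IsProbabilityMeasure μ]

theorem measure_eq_of_indepFun_of_uniform {β : Type*} [Fintype β] [MeasurableSpace β]
    [MeasurableSingletonClass β] {A B : Ω → β} (hA : Measurable A) (hB : Measurable B)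
    (hAB : A ⟂ᵢ[μ] B) {r : ℝ≥0∞} (hunif : ∀ k, μ {ω | A ω = k} = r) :
    μ {ω | A ω = B ω} = r := by
  classical
  rw [measure_setOf_eq_sum_preimage_singleton (X := fun ω => (A ω, B ω)) (hA.prodMk hB)
    (fun _ => mem_univ _) (fun x => x.1 = x.2), sum_filter, Fintype.sum_prod_type]
  simp only [sum_ite_eq, mem_univ, if_true]
  calc ∑ u, μ ((fun ω => (A ω, B ω)) ⁻¹' {(u, u)})
      = ∑ u, r * μ (B ⁻¹' {u}) := by
        refine sum_congr rfl fun u _ => ?_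
        rw [← Set.singleton_prod_singleton, Set.mk_preimage_prod,
          hAB.measure_inter_preimage_eq_mul _ _ (measurableSet_singleton u)
            (measurableSet_singleton u)]
        exact congrArg (· * _) (hunif u)
    _ = r := by
        rw [← mul_sum, sum_measure_preimage_singleton _ fun u _ => hB (measurableSet_singleton u)]
        simp

theorem measure_apply_eq_comp_apply {β : Type*} [Fintype β] [MeasurableSpace β]
    [MeasurableSingletonClass β] {H : Ω → ι → β} (hH : Measurable H)
    (hunif : ∀ k u, μ {ω | H ω k = u} = 1 / (Fintype.card β : ℝ≥0∞))
    (hpair : ∀ k k', k ≠ k' → ∀ u v,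
      μ {ω | H ω k = u ∧ H ω k' = v} = μ {ω | H ω k = u} * μ {ω | H ω k' = v})
    {a a' : ι} (h : a ≠ a') (c : β → β) :
    μ {ω | H ω a' = c (H ω a)} = 1 / Fintype.card β := by
  classical
  have : Nonempty β := ⟨H (nonempty_of_isProbabilityMeasure μ).some a⟩
  have hb : (Fintype.card β : ℝ≥0∞) ≠ 0 := by simp
  have hfib : ∀ u v, μ ((fun ω => (H ω a, H ω a')) ⁻¹' {(u, v)})
      = 1 / Fintype.card β * (1 / Fintype.card β) := fun u v => by
    have hset : (fun ω => (H ω a, H ω a')) ⁻¹' {(u, v)} = {ω | H ω a = u ∧ H ω a' = v} := by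
      ext ω; simp
    rw [hset, hpair a a' h, hunif, hunif]
  rw [measure_setOf_eq_sum_preimage_singleton (X := fun ω => (H ω a, H ω a')) (by fun_prop)
    (fun _ => mem_univ _) (fun x => x.2 = c x.1), sum_filter, Fintype.sum_prod_type]
  simp only [hfib, sum_ite_eq', mem_univ, if_true, sum_const, card_univ, nsmul_eq_mul]
  rw [← mul_assoc, one_div, ENNReal.mul_inv_cancel hb (ENNReal.natCast_ne_top _), one_mul]

variable {m : ℕ}

theorem measure_fxor_apply_eq {H : Ω → ι → Fin (2^m)} (hH : Measurable H)
    (hunif : ∀ k u, μ {ω | H ω k = u} = 1 / (2^m : ℝ≥0∞))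
    (hpair : ∀ k k', k ≠ k' → ∀ u v,
      μ {ω | H ω k = u ∧ H ω k' = v} = μ {ω | H ω k = u} * μ {ω | H ω k' = v})
    {a a' : ι} (h : a ≠ a') (k : Fin (2^m)) :
    μ {ω | fxor (H ω a) (H ω a') = k} = 1 / 2^m := by
  simp_rw [fxor_eq_iff_eq_fxor]
  simpa using measure_apply_eq_comp_apply hH (by simpa using hunif) hpair h (fxor · k)

theorem measure_fxor_collision {H1 H2 : Ω → ι → Fin (2^m)} (hH1 : Measurable H1)
    (hH2 : Measurable H2) (hH : H1 ⟂ᵢ[μ] H2)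
    (hH1unif : ∀ k u, μ {ω | H1 ω k = u} = 1 / (2^m : ℝ≥0∞))
    (hH1pair : ∀ k k', k ≠ k' → ∀ u v,
      μ {ω | H1 ω k = u ∧ H1 ω k' = v} = μ {ω | H1 ω k = u} * μ {ω | H1 ω k' = v})
    (hH2unif : ∀ k u, μ {ω | H2 ω k = u} = 1 / (2^m : ℝ≥0∞))
    (hH2pair : ∀ k k', k ≠ k' → ∀ u v,
      μ {ω | H2 ω k = u ∧ H2 ω k' = v} = μ {ω | H2 ω k = u} * μ {ω | H2 ω k' = v})
    {i j : ι} {p : ι × ι} (hp : p ≠ (i, j)) :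
    μ {ω | fxor (H1 ω p.1) (H2 ω p.2) = fxor (H1 ω i) (H2 ω j)} = 1 / 2^m := by
  by_cases h1 : p.1 = i
  · have h2 : j ≠ p.2 := fun h => hp (Prod.ext h1 h.symm)
    simp_rw [h1, fxor_right_inj]
    simpa using measure_apply_eq_comp_apply hH2 (by simpa using hH2unif) hH2pair h2 id
  · simp_rw [fxor_eq_fxor_iff]
    have hxor : ∀ a b : ι, Measurable fun f : ι → Fin (2^m) => fxor (f a) (f b) := fun a b =>
      measurable_fxor.comp (f := fun f : ι → Fin (2^m) => (f a, f b)) (by fun_prop)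
    exact measure_eq_of_indepFun_of_uniform ((hxor _ _).comp hH1) ((hxor _ _).comp hH2)
      (hH.comp (hxor _ _) (hxor _ _)) (measure_fxor_apply_eq hH1 hH1unif hH1pair h1)

end Hashing

-- The contribution of entry `p` to the error of the estimate of entry `(i, j)`, up to the
-- common sign `s1 i * s2 j`.
def collisionSign {n m : ℕ} (h1 h2 : Fin n → Fin (2^m)) (s1 s2 : Fin n → ℝ) (i j : Fin n)
    (p : Fin n × Fin n) : ℝ :=
  if fxor (h1 p.1) (h2 p.2) = fxor (h1 i) (h2 j) then s1 p.1 * s2 p.2 else 0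

theorem abs_estimate_sub {n m : ℕ} (C : Matrix (Fin n) (Fin n) ℝ) {h1 h2 : Fin n → Fin (2^m)}
    {s1 s2 : Fin n → ℝ} {i j : Fin n} (hs1 : |s1 i| = 1) (hs2 : |s2 j| = 1) :
    |estimate C h1 h2 s1 s2 i j - C i j|
      = |∑ p ∈ univ.erase (i, j), C p.1 p.2 * collisionSign h1 h2 s1 s2 i j p| := by
  have hsketch : sketch C h1 h2 s1 s2 (fxor (h1 i) (h2 j))
      = ∑ p, C p.1 p.2 * collisionSign h1 h2 s1 s2 i j p := by
    rw [sketch, sum_filter]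
    refine sum_congr rfl fun p _ => ?_
    unfold collisionSign
    split_ifs <;> ring
  have hsq1 : s1 i * s1 i = 1 := by rw [← abs_mul_abs_self, hs1, one_mul]
  have hsq2 : s2 j * s2 j = 1 := by rw [← abs_mul_abs_self, hs2, one_mul]
  rw [estimate, hsketch, ← add_sum_erase _ _ (mem_univ (i, j)), collisionSign, if_pos rfl]
  calc |s1 i * s2 j * (C i j * (s1 i * s2 j)
          + ∑ p ∈ univ.erase (i, j), C p.1 p.2 * collisionSign h1 h2 s1 s2 i j p) - C i j|
      = |s1 i * s2 j * ∑ p ∈ univ.erase (i, j), C p.1 p.2 * collisionSign h1 h2 s1 s2 i j p| := by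
        congr 1
        linear_combination C i j * (s2 j * s2 j) * hsq1 + C i j * hsq2
    _ = _ := by rw [abs_mul, abs_mul, hs1, hs2, one_mul, one_mul]

theorem integral_collisionSign_mul {Ω : Type*} [MeasurableSpace Ω] {μ : Measure Ω} {n m : ℕ}
    {H1 H2 : Ω → Fin n → Fin (2^m)} {S1 S2 : Ω → Fin n → ℝ} (hH1 : Measurable H1)
    (hH2 : Measurable H2) (hS1 : Measurable S1) (hS2 : Measurable S2)
    (hS1ind : S1 ⟂ᵢ[μ] fun ω => ((H1 ω, H2 ω), S2 ω))
    (hS2ind : S2 ⟂ᵢ[μ] fun ω => ((H1 ω, H2 ω), S1 ω))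
    (hS1orth : ∀ a a', ∫ ω, S1 ω a * S1 ω a' ∂μ = if a = a' then 1 else 0)
    (hS2orth : ∀ a a', ∫ ω, S2 ω a * S2 ω a' ∂μ = if a = a' then 1 else 0)
    (i j : Fin n) (p q : Fin n × Fin n) :
    ∫ ω, collisionSign (H1 ω) (H2 ω) (S1 ω) (S2 ω) i j p
        * collisionSign (H1 ω) (H2 ω) (S1 ω) (S2 ω) i j q ∂μ
      = if p = q then μ.real {ω | fxor (H1 ω p.1) (H2 ω p.2) = fxor (H1 ω i) (H2 ω j)} else 0 := by
  let E : Fin n × Fin n → Set ((Fin n → Fin (2^m)) × (Fin n → Fin (2^m))) :=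
    fun p => {h | fxor (h.1 p.1) (h.2 p.2) = fxor (h.1 i) (h.2 j)}
  have hfac : ∀ ω, collisionSign (H1 ω) (H2 ω) (S1 ω) (S2 ω) i j p
      * collisionSign (H1 ω) (H2 ω) (S1 ω) (S2 ω) i j q
      = (E p ∩ E q).indicator 1 (H1 ω, H2 ω) * (S1 ω p.1 * S1 ω q.1)
        * (S2 ω p.2 * S2 ω q.2) := fun ω => by
    simp only [collisionSign, Set.indicator_apply, Set.mem_inter_iff, E, Set.mem_ofPred_eq,
      Pi.one_apply]
    split_ifs <;> simp_all
    ring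
  simp_rw [hfac]
  rw [integral_mul_mul_of_indepFun (f := (E p ∩ E q).indicator 1) (g := fun s => s p.1 * s q.1)
    (h := fun s => s p.2 * s q.2) (hH1.prodMk hH2) hS1 hS2 hS1ind hS2ind .of_discrete
    (by fun_prop) (by fun_prop), hS1orth, hS2orth]
  by_cases hpq : p = q
  · subst hpq
    simp only [Set.inter_self, if_true, mul_one]
    exact integral_indicator_one ((hH1.prodMk hH2) (MeasurableSet.of_discrete (s := E p)))
  · obtain h | h := not_and_or.1 fun h : p.1 = q.1 ∧ p.2 = q.2 => hpq (Prod.ext h.1 h.2) <;>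
      simp [h, hpq]

theorem compressed_mm_fwht_chebyshev_general
    {Ω : Type*} [MeasureSpace Ω] [IsProbabilityMeasure (ℙ : Measure Ω)]
    (n m : ℕ)
    (C : Matrix (Fin n) (Fin n) ℝ)
    (H1 H2 : Ω → Fin n → Fin (2^m)) (S1 S2 : Ω → Fin n → ℝ)
    (hmH1 : Measurable H1) (hmH2 : Measurable H2)
    (hmS1 : Measurable S1) (hmS2 : Measurable S2)
    -- the four random functions are mutually independent:
    (hindep : ∀ (f1 f2 : Fin n → Fin (2^m)) (g1 g2 : Fin n → ℝ),
      ℙ {ω | H1 ω = f1 ∧ H2 ω = f2 ∧ S1 ω = g1 ∧ S2 ω = g2}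
        = ℙ {ω | H1 ω = f1} * ℙ {ω | H2 ω = f2} * ℙ {ω | S1 ω = g1} * ℙ {ω | S2 ω = g2})
    -- H1 and H2 are pairwise independent uniform families into Fin (2^m):
    (hH1unif : ∀ i u, ℙ {ω | H1 ω i = u} = 1 / (2^m : ℝ≥0∞))
    (hH1pair : ∀ i i', i ≠ i' → ∀ u v,
      ℙ {ω | H1 ω i = u ∧ H1 ω i' = v} = ℙ {ω | H1 ω i = u} * ℙ {ω | H1 ω i' = v})
    (hH2unif : ∀ j u, ℙ {ω | H2 ω j = u} = 1 / (2^m : ℝ≥0∞))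
    (hH2pair : ∀ j j', j ≠ j' → ∀ u v,
      ℙ {ω | H2 ω j = u ∧ H2 ω j' = v} = ℙ {ω | H2 ω j = u} * ℙ {ω | H2 ω j' = v})
    -- S1 and S2 are pairwise independent uniform families of random signs:
    (hS1val : ∀ ω i, S1 ω i ∈ ({-1, 1} : Set ℝ))
    (hS2val : ∀ ω j, S2 ω j ∈ ({-1, 1} : Set ℝ))
    (hS1unif : ∀ i, ∀ u ∈ ({-1, 1} : Set ℝ), ℙ {ω | S1 ω i = u} = 1 / 2)
    (hS1pair : ∀ i i', i ≠ i' → ∀ u v : ℝ,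
      ℙ {ω | S1 ω i = u ∧ S1 ω i' = v} = ℙ {ω | S1 ω i = u} * ℙ {ω | S1 ω i' = v})
    (hS2unif : ∀ j, ∀ u ∈ ({-1, 1} : Set ℝ), ℙ {ω | S2 ω j = u} = 1 / 2)
    (hS2pair : ∀ j j', j ≠ j' → ∀ u v : ℝ,
      ℙ {ω | S2 ω j = u ∧ S2 ω j' = v} = ℙ {ω | S2 ω j = u} * ℙ {ω | S2 ω j' = v})
    (i j : Fin n) (t : ℝ) (ht : 0 < t) :
    ℙ {ω | t ≤ |estimate C (H1 ω) (H2 ω) (S1 ω) (S2 ω) i j - C i j|}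
      ≤ ENNReal.ofReal ((∑ i' : Fin n, ∑ j' : Fin n, (C i' j')^2) / ((2^m : ℝ) * t^2)) := by
  have hS1fin := fun ω => mem_piFinset_of_mem_sign (hS1val ω)
  have hS2fin := fun ω => mem_piFinset_of_mem_sign (hS2val ω)
  obtain ⟨hH, hS1ind, hS2ind⟩ :=
    indepFun_of_measure_eq_mul₄ hmH1 hmH2 hmS1 hmS2 hS1fin hS2fin hindep
  have hint : ∀ F : (Fin n → Fin (2^m)) × (Fin n → Fin (2^m)) × (Fin n → ℝ) × (Fin n → ℝ) → ℝ,
      Integrable (fun ω => F (H1 ω, H2 ω, S1 ω, S2 ω)) := fun F =>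
    integrable_comp_of_mem_finset (s := univ ×ˢ univ ×ˢ _ ×ˢ _) (by fun_prop)
      (fun ω => mem_product.2 ⟨mem_univ _, mem_product.2 ⟨mem_univ _,
        mem_product.2 ⟨hS1fin ω, hS2fin ω⟩⟩⟩) F
  set W := fun p ω => collisionSign (H1 ω) (H2 ω) (S1 ω) (S2 ω) i j p
  have hW := integral_collisionSign_mul hmH1 hmH2 hmS1 hmS2 hS1ind hS2ind
    (integral_mul_eq_ite_of_sign hmS1 hS1val hS1unif hS1pair)
    (integral_mul_eq_ite_of_sign hmS2 hS2val hS2unif hS2pair) i j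
  have hWsq : ∀ p ∈ univ.erase (i, j), ∫ ω, W p ω ^ 2 = 1 / 2^m := fun p hp => by
    simp_rw [sq]
    rw [hW, if_pos rfl, measureReal_def, measure_fxor_collision hmH1 hmH2 hH hH1unif hH1pair
      hH2unif hH2pair (ne_of_mem_erase hp)]
    simp
  calc ℙ {ω | t ≤ |estimate C (H1 ω) (H2 ω) (S1 ω) (S2 ω) i j - C i j|}
      = ℙ {ω | t ≤ |∑ p ∈ univ.erase (i, j), C p.1 p.2 * W p ω|} := by
        congr 1 with ω
        rw [Set.mem_ofPred_eq, Set.mem_ofPred_eq, abs_estimate_sub C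
          (abs_eq_one_of_mem_sign (hS1val ω i)) (abs_eq_one_of_mem_sign (hS2val ω j))]
    _ ≤ ENNReal.ofReal ((∫ ω, (∑ p ∈ univ.erase (i, j), C p.1 p.2 * W p ω) ^ 2) / t ^ 2) :=
        measure_le_abs_le_ofReal_integral_sq_div (hint fun x => (∑ p ∈ univ.erase (i, j),
          C p.1 p.2 * collisionSign x.1 x.2.1 x.2.2.1 x.2.2.2 i j p) ^ 2) ht
    _ = ENNReal.ofReal ((∑ p ∈ univ.erase (i, j), C p.1 p.2 ^ 2 * (1 / 2^m)) / t ^ 2) := by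
        rw [integral_sq_sum_of_orthogonal _ _ _ (fun p _ q _ => hint fun x =>
          collisionSign x.1 x.2.1 x.2.2.1 x.2.2.2 i j p
            * collisionSign x.1 x.2.1 x.2.2.1 x.2.2.2 i j q)
          fun p _ q _ hpq => by rw [hW, if_neg hpq], sum_congr rfl fun p hp => by rw [hWsq p hp]]
    _ ≤ _ := by
        rw [← sum_mul, mul_one_div, div_div, ← Fintype.sum_prod_type']
        gcongr
        exact erase_subset _ _

/-- Chebyshev-type tail bound for the FWHT-based compressed matrix multiplication
estimator: for every entry `(i,j)` of `C = A * B` and every `t > 0`,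
`Pr[|X̃(i,j) − C[i][j]| ≥ t] ≤ ‖C‖_F² / (b · t²)` with `b = 2^m`. -/
theorem compressed_mm_fwht_chebyshev
    {Ω : Type*} [MeasureSpace Ω] [IsProbabilityMeasure (ℙ : Measure Ω)]
    (n m : ℕ) (hn : 0 < n)
    (A B C : Matrix (Fin n) (Fin n) ℝ) (hC : C = A * B)
    (H1 H2 : Ω → Fin n → Fin (2^m)) (S1 S2 : Ω → Fin n → ℝ)
    (hmH1 : Measurable H1) (hmH2 : Measurable H2)
    (hmS1 : Measurable S1) (hmS2 : Measurable S2)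
    -- the four random functions are mutually independent:
    (hindep : ∀ (f1 f2 : Fin n → Fin (2^m)) (g1 g2 : Fin n → ℝ),
      ℙ {ω | H1 ω = f1 ∧ H2 ω = f2 ∧ S1 ω = g1 ∧ S2 ω = g2}
        = ℙ {ω | H1 ω = f1} * ℙ {ω | H2 ω = f2} * ℙ {ω | S1 ω = g1} * ℙ {ω | S2 ω = g2})
    -- H1 and H2 are pairwise independent uniform families into Fin (2^m):
    (hH1unif : ∀ i u, ℙ {ω | H1 ω i = u} = 1 / (2^m : ℝ≥0∞))
    (hH1pair : ∀ i i', i ≠ i' → ∀ u v,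
      ℙ {ω | H1 ω i = u ∧ H1 ω i' = v} = ℙ {ω | H1 ω i = u} * ℙ {ω | H1 ω i' = v})
    (hH2unif : ∀ j u, ℙ {ω | H2 ω j = u} = 1 / (2^m : ℝ≥0∞))
    (hH2pair : ∀ j j', j ≠ j' → ∀ u v,
      ℙ {ω | H2 ω j = u ∧ H2 ω j' = v} = ℙ {ω | H2 ω j = u} * ℙ {ω | H2 ω j' = v})
    -- S1 and S2 are pairwise independent uniform families of random signs:
    (hS1val : ∀ ω i, S1 ω i ∈ ({-1, 1} : Set ℝ))
    (hS2val : ∀ ω j, S2 ω j ∈ ({-1, 1} : Set ℝ))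
    (hS1unif : ∀ i, ∀ u ∈ ({-1, 1} : Set ℝ), ℙ {ω | S1 ω i = u} = 1 / 2)
    (hS1pair : ∀ i i', i ≠ i' → ∀ u v : ℝ,
      ℙ {ω | S1 ω i = u ∧ S1 ω i' = v} = ℙ {ω | S1 ω i = u} * ℙ {ω | S1 ω i' = v})
    (hS2unif : ∀ j, ∀ u ∈ ({-1, 1} : Set ℝ), ℙ {ω | S2 ω j = u} = 1 / 2)
    (hS2pair : ∀ j j', j ≠ j' → ∀ u v : ℝ,
      ℙ {ω | S2 ω j = u ∧ S2 ω j' = v} = ℙ {ω | S2 ω j = u} * ℙ {ω | S2 ω j' = v})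
    (i j : Fin n) (t : ℝ) (ht : 0 < t) :
    ℙ {ω | t ≤ |estimate C (H1 ω) (H2 ω) (S1 ω) (S2 ω) i j - C i j|}
      ≤ ENNReal.ofReal ((∑ i' : Fin n, ∑ j' : Fin n, (C i' j')^2) / ((2^m : ℝ) * t^2)) :=
  compressed_mm_fwht_chebyshev_general n m C H1 H2 S1 S2 hmH1 hmH2 hmS1 hmS2 hindep hH1unif hH1pair
    hH2unif hH2pair hS1val hS2val hS1unif hS1pair hS2unif hS2pair i j t ht
end

section
/- Under the hypotheses of the FWHT compressed matrix multiplication setup — n ≥ 1, b = 2^m, C = A * B for A, B : Matrix (Fin n) (Fin n) ℝ, mutually independent H1, H2 : Ω → (Fin n → Fin b) and S1, S2 : Ω → (Fin n → {-1,1}), each of H1, H2 a pairwise independent uniform family and each of S1, S2 a pairwise independent uniform family of random signs, with estimator X̃(i,j) = S1(i)·S2(j)·P[H1(i) XOR H2(j)] where P[k] = Σ_{(i',j') : H1(i') XOR H2(j') = k} S1(i')·S2(j')·C[i'][j'] — for every (i,j), Pr[X̃(i,j) ≠ C[i][j]] ≤ nnz(C) / b, where nnz(C) is the number of nonzero entries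 of C. In particular, when the product matrix is sparse the estimate is exact with high probability for b sufficiently large. -/
/-!
The cell `h1(i) ⊕ h2(j)` of the sketch holds `s1(i)·s2(j)·C[i][j]` plus the signed contributions
of the other entries hashed to the same cell; as `s1(i)² = s2(j)² = 1`, the estimate is exact
unless some nonzero entry `(i', j') ≠ (i, j)` collides with `(i, j)`. Such a collision has
probability exactly `1/b`: for `j' = j` it reads `h1(i') = h1(i)`, and otherwise, conditionally
on `h1`, it reads `h2(j') = c ⊕ h2(j)` for a constant `c`; both have probability `1/b` by pairwise
independence and uniformity. A union bound over the nonzero entries of `C` concludes.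
The independence of `H1` and `H2` comes from the fourfold one by summing out the finitely many
sign patterns.
-/

open MeasureTheory
open scoped ENNReal ProbabilityTheory

lemma fxor_eq_xor {m : ℕ} (a b : Fin (2^m)) : fxor a b = a ^^^ b :=
  Fin.ext (Nat.mod_eq_of_lt (Nat.xor_lt_two_pow a.isLt b.isLt)).symm

section Fibers

variable {Ω α β : Type*} [MeasurableSpace Ω] {μ : Measure Ω}

lemma measure_eq_sum_measure_fiber_inter {Y : Ω → α} {s : Finset α}
    (hY : ∀ c ∈ s, MeasurableSet (Y ⁻¹' {c})) (hs : ∀ ω, Y ω ∈ s) (E : Set Ω) :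
    μ E = ∑ c ∈ s, μ (Y ⁻¹' {c} ∩ E) := by
  have h := sum_measure_preimage_singleton (μ := μ.restrict E) s hY
  rw [show Y ⁻¹' ↑s = Set.univ from Set.eq_univ_of_forall hs, Measure.restrict_apply_univ] at h
  rw [← h]
  exact Finset.sum_congr rfl fun c hc => Measure.restrict_apply (hY c hc)

lemma measure_eq_of_measure_fiber_inter_eq_mul [IsProbabilityMeasure μ] {Y : Ω → α}
    {s : Finset α} (hY : ∀ c ∈ s, MeasurableSet (Y ⁻¹' {c})) (hs : ∀ ω, Y ω ∈ s)
    {E : Set Ω} {a : ℝ≥0∞} (h : ∀ c ∈ s, μ (Y ⁻¹' {c} ∩ E) = a * μ (Y ⁻¹' {c})) :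
    μ E = a := by
  have htotal : ∑ c ∈ s, μ (Y ⁻¹' {c}) = 1 := by
    simpa using (measure_eq_sum_measure_fiber_inter (μ := μ) hY hs Set.univ).symm
  rw [measure_eq_sum_measure_fiber_inter hY hs E, Finset.sum_congr rfl h, ← Finset.mul_sum,
    htotal, mul_one]

lemma measure_fiber_inter_preimage_eq_mul [Fintype β] [MeasurableSpace β]
    [MeasurableSingletonClass β] {X : Ω → α} {Y : Ω → β} {a : α}
    (hX : MeasurableSet (X ⁻¹' {a})) (hY : Measurable Y)
    (h : ∀ b, μ (X ⁻¹' {a} ∩ Y ⁻¹' {b}) = μ (X ⁻¹' {a}) * μ (Y ⁻¹' {b})) (B : Set β) :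
    μ (X ⁻¹' {a} ∩ Y ⁻¹' B) = μ (X ⁻¹' {a}) * μ (Y ⁻¹' B) := by
  classical
  have hsum : ∀ ν : Measure Ω, ν (Y ⁻¹' B) = ∑ b ∈ B.toFinset, ν (Y ⁻¹' {b}) := fun ν => by
    rw [sum_measure_preimage_singleton _ fun b _ => hY (measurableSet_singleton b),
      Set.coe_toFinset]
  rw [Set.inter_comm, ← Measure.restrict_apply' hX, hsum, hsum, Finset.mul_sum]
  refine Finset.sum_congr rfl fun b _ => ?_
  rw [Measure.restrict_apply' hX, Set.inter_comm, h]

lemma measure_fiber_inter_fiber_eq_mul_of_indep [IsProbabilityMeasure μ] {γ δ : Type*}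
    [MeasurableSpace γ] [MeasurableSingletonClass γ] [MeasurableSpace δ]
    [MeasurableSingletonClass δ] {X : Ω → α} {Y : Ω → β} {S : Ω → γ} {T : Ω → δ}
    (hS : Measurable S) (hT : Measurable T) {s : Finset γ} {t : Finset δ}
    (hSs : ∀ ω, S ω ∈ s) (hTt : ∀ ω, T ω ∈ t)
    (hindep : ∀ a b c d, μ {ω | X ω = a ∧ Y ω = b ∧ S ω = c ∧ T ω = d}
      = μ {ω | X ω = a} * μ {ω | Y ω = b} * μ {ω | S ω = c} * μ {ω | T ω = d})
    (a : α) (b : β) :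
    μ (X ⁻¹' {a} ∩ Y ⁻¹' {b}) = μ (X ⁻¹' {a}) * μ (Y ⁻¹' {b}) := by
  refine measure_eq_of_measure_fiber_inter_eq_mul (fun c _ => hS (measurableSet_singleton c))
    hSs fun c _ => ?_
  refine measure_eq_of_measure_fiber_inter_eq_mul (fun d _ => hT (measurableSet_singleton d))
    hTt fun d _ => ?_
  have hset : T ⁻¹' {d} ∩ (S ⁻¹' {c} ∩ (X ⁻¹' {a} ∩ Y ⁻¹' {b}))
      = {ω | X ω = a ∧ Y ω = b ∧ S ω = c ∧ T ω = d} := by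
    ext ω
    simp only [Set.mem_inter_iff, Set.mem_preimage, Set.mem_singleton_iff, Set.mem_ofPred_eq]
    tauto
  rw [hset, hindep]
  rfl

variable {ι : Type*} [Fintype β] [MeasurableSpace β] [MeasurableSingletonClass β]

lemma measure_apply_eq_comp_apply_s14 [Nonempty β] {X : Ω → ι → β} (hX : Measurable X)
    (hunif : ∀ i u, μ {ω | X ω i = u} = (Fintype.card β : ℝ≥0∞)⁻¹)
    (hpair : ∀ i i', i ≠ i' → ∀ u v,
      μ {ω | X ω i = u ∧ X ω i' = v} = μ {ω | X ω i = u} * μ {ω | X ω i' = v})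
    {i i' : ι} (hii' : i ≠ i') (g : β → β) :
    μ {ω | X ω i' = g (X ω i)} = (Fintype.card β : ℝ≥0∞)⁻¹ := by
  have hXi : Measurable fun ω => X ω i := (measurable_pi_apply i).comp hX
  rw [measure_eq_sum_measure_fiber_inter (fun u _ => hXi (measurableSet_singleton u))
    (fun ω => Finset.mem_univ (X ω i))]
  have hfiber : ∀ u, μ ((fun ω => X ω i) ⁻¹' {u} ∩ {ω | X ω i' = g (X ω i)})
      = (Fintype.card β : ℝ≥0∞)⁻¹ * (Fintype.card β : ℝ≥0∞)⁻¹ := fun u => by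
    have hset : (fun ω => X ω i) ⁻¹' {u} ∩ {ω | X ω i' = g (X ω i)}
        = {ω | X ω i = u ∧ X ω i' = g u} := by
      ext ω
      simp only [Set.mem_inter_iff, Set.mem_preimage, Set.mem_singleton_iff, Set.mem_ofPred_eq]
      constructor
      · rintro ⟨rfl, h⟩; exact ⟨rfl, h⟩
      · rintro ⟨rfl, h⟩; exact ⟨rfl, h⟩
    rw [hset, hpair i i' hii', hunif, hunif]
  have hcard : (Fintype.card β : ℝ≥0∞) ≠ 0 := by simp
  rw [Finset.sum_congr rfl fun u _ => hfiber u, Finset.sum_const, Finset.card_univ, nsmul_eq_mul,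
    ← mul_assoc, ENNReal.mul_inv_cancel hcard (ENNReal.natCast_ne_top _), one_mul]

lemma measure_xor_eq_xor [IsProbabilityMeasure μ] [Fintype ι] [DecidableEq ι] [XorOp β] [Zero β] [LawfulXor β]
    {X Y : Ω → ι → β} (hX : Measurable X) (hY : Measurable Y)
    (hXY : ∀ f g, μ (X ⁻¹' {f} ∩ Y ⁻¹' {g}) = μ (X ⁻¹' {f}) * μ (Y ⁻¹' {g}))
    (hXunif : ∀ i u, μ {ω | X ω i = u} = (Fintype.card β : ℝ≥0∞)⁻¹)
    (hXpair : ∀ i i', i ≠ i' → ∀ u v,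
      μ {ω | X ω i = u ∧ X ω i' = v} = μ {ω | X ω i = u} * μ {ω | X ω i' = v})
    (hYunif : ∀ j u, μ {ω | Y ω j = u} = (Fintype.card β : ℝ≥0∞)⁻¹)
    (hYpair : ∀ j j', j ≠ j' → ∀ u v,
      μ {ω | Y ω j = u ∧ Y ω j' = v} = μ {ω | Y ω j = u} * μ {ω | Y ω j' = v})
    {i j i' j' : ι} (hne : (i', j') ≠ (i, j)) :
    μ {ω | X ω i' ^^^ Y ω j' = X ω i ^^^ Y ω j} = (Fintype.card β : ℝ≥0∞)⁻¹ := by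
  by_cases hj : j' = j
  · subst hj
    have hii' : i ≠ i' := fun h => hne (by rw [h])
    simp only [(xor_left_involutive _).injective.eq_iff]
    exact measure_apply_eq_comp_apply_s14 hX hXunif hXpair hii' id
  · refine measure_eq_of_measure_fiber_inter_eq_mul
      (fun f _ => hX (measurableSet_singleton f)) (fun ω => Finset.mem_univ (X ω)) fun f _ => ?_
    have hset : X ⁻¹' {f} ∩ {ω | X ω i' ^^^ Y ω j' = X ω i ^^^ Y ω j}
        = X ⁻¹' {f} ∩ Y ⁻¹' {g | g j' = f i' ^^^ (f i ^^^ g j)} := by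
      ext ω
      simp only [Set.mem_inter_iff, Set.mem_preimage, Set.mem_singleton_iff, Set.mem_ofPred_eq]
      constructor
      · rintro ⟨rfl, h⟩; exact ⟨rfl, (xor_eq_iff_right_eq _ _ _).mp h⟩
      · rintro ⟨rfl, h⟩; exact ⟨rfl, (xor_eq_iff_right_eq _ _ _).mpr h⟩
    rw [hset, measure_fiber_inter_preimage_eq_mul (hX (measurableSet_singleton f)) hY (hXY f),
      mul_comm]
    congr 1
    exact measure_apply_eq_comp_apply_s14 hY hYunif hYpair (Ne.symm hj) fun u => f i' ^^^ (f i ^^^ u)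

end Fibers

lemma exists_collision_of_estimate_ne {n m : ℕ} {C : Matrix (Fin n) (Fin n) ℝ}
    {h1 h2 : Fin n → Fin (2^m)} {s1 s2 : Fin n → ℝ} {i j : Fin n}
    (hs1 : s1 i ∈ ({-1, 1} : Set ℝ)) (hs2 : s2 j ∈ ({-1, 1} : Set ℝ))
    (hne : estimate C h1 h2 s1 s2 i j ≠ C i j) :
    ∃ p ∈ (Finset.univ.filter (fun p : Fin n × Fin n => C p.1 p.2 ≠ 0)).erase (i, j),
      fxor (h1 p.1) (h2 p.2) = fxor (h1 i) (h2 j) := by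
  by_contra! hfree
  have hsketch : sketch C h1 h2 s1 s2 (fxor (h1 i) (h2 j)) = s1 i * s2 j * C i j := by
    refine Finset.sum_eq_single_of_mem (i, j) (by simp) fun p hp hpij => ?_
    by_cases hC : C p.1 p.2 = 0
    · simp [hC]
    · exact absurd (Finset.mem_filter.mp hp).2 (hfree p (by simp [hpij, hC]))
  have hsq : ∀ s ∈ ({-1, 1} : Set ℝ), s * s = 1 := by
    rintro s (rfl | rfl) <;> norm_num
  apply hne
  calc estimate C h1 h2 s1 s2 i j = (s1 i * s1 i) * (s2 j * s2 j) * C i j := by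
        rw [estimate, hsketch]; ring
    _ = C i j := by rw [hsq _ hs1, hsq _ hs2, one_mul, one_mul]

theorem compressed_mm_fwht_exact_whp_general
    {Ω : Type*} [MeasureSpace Ω] [IsProbabilityMeasure (ℙ : Measure Ω)]
    (n m : ℕ)
    (C : Matrix (Fin n) (Fin n) ℝ)
    (H1 H2 : Ω → Fin n → Fin (2^m)) (S1 S2 : Ω → Fin n → ℝ)
    (hmH1 : Measurable H1) (hmH2 : Measurable H2)
    (hmS1 : Measurable S1) (hmS2 : Measurable S2)
    -- the four random functions are mutually independent:
    (hindep : ∀ (f1 f2 : Fin n → Fin (2^m)) (g1 g2 : Fin n → ℝ),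
      ℙ {ω | H1 ω = f1 ∧ H2 ω = f2 ∧ S1 ω = g1 ∧ S2 ω = g2}
        = ℙ {ω | H1 ω = f1} * ℙ {ω | H2 ω = f2} * ℙ {ω | S1 ω = g1} * ℙ {ω | S2 ω = g2})
    -- H1 and H2 are pairwise independent uniform families into Fin (2^m):
    (hH1unif : ∀ i u, ℙ {ω | H1 ω i = u} = 1 / (2^m : ℝ≥0∞))
    (hH1pair : ∀ i i', i ≠ i' → ∀ u v,
      ℙ {ω | H1 ω i = u ∧ H1 ω i' = v} = ℙ {ω | H1 ω i = u} * ℙ {ω | H1 ω i' = v})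
    (hH2unif : ∀ j u, ℙ {ω | H2 ω j = u} = 1 / (2^m : ℝ≥0∞))
    (hH2pair : ∀ j j', j ≠ j' → ∀ u v,
      ℙ {ω | H2 ω j = u ∧ H2 ω j' = v} = ℙ {ω | H2 ω j = u} * ℙ {ω | H2 ω j' = v})
    -- S1 and S2 are pairwise independent uniform families of random signs:
    (hS1val : ∀ ω i, S1 ω i ∈ ({-1, 1} : Set ℝ))
    (hS2val : ∀ ω j, S2 ω j ∈ ({-1, 1} : Set ℝ))
    (i j : Fin n) :
    ℙ {ω | estimate C (H1 ω) (H2 ω) (S1 ω) (S2 ω) i j ≠ C i j}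
      ≤ ((Finset.univ.filter (fun p : Fin n × Fin n => C p.1 p.2 ≠ 0)).card : ℝ≥0∞)
          / (2^m : ℝ≥0∞) := by
  set nnz := Finset.univ.filter (fun p : Fin n × Fin n => C p.1 p.2 ≠ 0)
  set signs := Fintype.piFinset fun _ : Fin n => ({-1, 1} : Finset ℝ)
  have hsigns : ∀ (S : Ω → Fin n → ℝ), (∀ ω i, S ω i ∈ ({-1, 1} : Set ℝ)) → ∀ ω, S ω ∈ signs :=
    fun S hS ω => Fintype.mem_piFinset.mpr fun i => by simpa using hS ω i
  have hH12 := measure_fiber_inter_fiber_eq_mul_of_indep hmS1 hmS2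
    (hsigns S1 hS1val) (hsigns S2 hS2val) hindep
  have hcard : (Fintype.card (Fin (2^m)) : ℝ≥0∞)⁻¹ = 1 / 2^m := by simp
  have hcollision : ∀ p ∈ nnz.erase (i, j),
      ℙ {ω | fxor (H1 ω p.1) (H2 ω p.2) = fxor (H1 ω i) (H2 ω j)} = 1 / 2^m := by
    intro p hp
    simp only [fxor_eq_xor, ← hcard]
    exact measure_xor_eq_xor hmH1 hmH2 hH12 (hcard ▸ hH1unif) hH1pair (hcard ▸ hH2unif) hH2pair
      (Finset.ne_of_mem_erase hp)
  calc ℙ {ω | estimate C (H1 ω) (H2 ω) (S1 ω) (S2 ω) i j ≠ C i j}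
      ≤ ℙ (⋃ p ∈ nnz.erase (i, j),
          {ω | fxor (H1 ω p.1) (H2 ω p.2) = fxor (H1 ω i) (H2 ω j)}) :=
        measure_mono fun ω hω => by
          obtain ⟨p, hp, hcol⟩ := exists_collision_of_estimate_ne (hS1val ω i) (hS2val ω j) hω
          exact Set.mem_biUnion hp hcol
    _ ≤ ∑ p ∈ nnz.erase (i, j),
          ℙ {ω | fxor (H1 ω p.1) (H2 ω p.2) = fxor (H1 ω i) (H2 ω j)} :=
        measure_biUnion_finset_le _ _
    _ = (nnz.erase (i, j)).card * (1 / 2^m) := by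
        rw [Finset.sum_congr rfl hcollision, Finset.sum_const, nsmul_eq_mul]
    _ ≤ nnz.card / 2^m := by
        rw [mul_one_div]
        gcongr
        exact Finset.erase_subset _ _

/-- For the FWHT-based compressed matrix multiplication estimator, the probability
that the estimate of entry `(i,j)` of `C = A * B` differs from the true value is at
most `nnz(C) / b` with `b = 2^m`, where `nnz(C)` is the number of nonzero entries of
`C`; in particular, when the product is sparse the estimate is exact with high
probability for `b` sufficiently large. -/
theorem compressed_mm_fwht_exact_whp
    {Ω : Type*} [MeasureSpace Ω] [IsProbabilityMeasure (ℙ : Measure Ω)]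
    (n m : ℕ) (hn : 0 < n)
    (A B C : Matrix (Fin n) (Fin n) ℝ) (hC : C = A * B)
    (H1 H2 : Ω → Fin n → Fin (2^m)) (S1 S2 : Ω → Fin n → ℝ)
    (hmH1 : Measurable H1) (hmH2 : Measurable H2)
    (hmS1 : Measurable S1) (hmS2 : Measurable S2)
    -- the four random functions are mutually independent:
    (hindep : ∀ (f1 f2 : Fin n → Fin (2^m)) (g1 g2 : Fin n → ℝ),
      ℙ {ω | H1 ω = f1 ∧ H2 ω = f2 ∧ S1 ω = g1 ∧ S2 ω = g2}
        = ℙ {ω | H1 ω = f1} * ℙ {ω | H2 ω = f2} * ℙ {ω | S1 ω = g1} * ℙ {ω | S2 ω = g2})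
    -- H1 and H2 are pairwise independent uniform families into Fin (2^m):
    (hH1unif : ∀ i u, ℙ {ω | H1 ω i = u} = 1 / (2^m : ℝ≥0∞))
    (hH1pair : ∀ i i', i ≠ i' → ∀ u v,
      ℙ {ω | H1 ω i = u ∧ H1 ω i' = v} = ℙ {ω | H1 ω i = u} * ℙ {ω | H1 ω i' = v})
    (hH2unif : ∀ j u, ℙ {ω | H2 ω j = u} = 1 / (2^m : ℝ≥0∞))
    (hH2pair : ∀ j j', j ≠ j' → ∀ u v,
      ℙ {ω | H2 ω j = u ∧ H2 ω j' = v} = ℙ {ω | H2 ω j = u} * ℙ {ω | H2 ω j' = v})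
    -- S1 and S2 are pairwise independent uniform families of random signs:
    (hS1val : ∀ ω i, S1 ω i ∈ ({-1, 1} : Set ℝ))
    (hS2val : ∀ ω j, S2 ω j ∈ ({-1, 1} : Set ℝ))
    (hS1unif : ∀ i, ∀ u ∈ ({-1, 1} : Set ℝ), ℙ {ω | S1 ω i = u} = 1 / 2)
    (hS1pair : ∀ i i', i ≠ i' → ∀ u v : ℝ,
      ℙ {ω | S1 ω i = u ∧ S1 ω i' = v} = ℙ {ω | S1 ω i = u} * ℙ {ω | S1 ω i' = v})
    (hS2unif : ∀ j, ∀ u ∈ ({-1, 1} : Set ℝ), ℙ {ω | S2 ω j = u} = 1 / 2)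
    (hS2pair : ∀ j j', j ≠ j' → ∀ u v : ℝ,
      ℙ {ω | S2 ω j = u ∧ S2 ω j' = v} = ℙ {ω | S2 ω j = u} * ℙ {ω | S2 ω j' = v})
    (i j : Fin n) :
    ℙ {ω | estimate C (H1 ω) (H2 ω) (S1 ω) (S2 ω) i j ≠ C i j}
      ≤ ((Finset.univ.filter (fun p : Fin n × Fin n => C p.1 p.2 ≠ 0)).card : ℝ≥0∞)
          / (2^m : ℝ≥0∞) :=
  compressed_mm_fwht_exact_whp_general n m C H1 H2 S1 S2 hmH1 hmH2 hmS1 hmS2 hindep hH1unif hH1pair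
    hH2unif hH2pair hS1val hS2val i j
end

section
/- Let d be an odd positive natural number, c and t real numbers with t > 0, and let X_1, …, X_d : Ω → ℝ be independent identically distributed random variables such that Pr[|X_k − c| ≥ t] ≤ 1/4 for each k. Then the median of X_1, …, X_d satisfies Pr[|median(X_1,…,X_d) − c| ≥ t] ≤ exp(−d/8). (This justifies boosting the per-sketch guarantee of compressed matrix multiplication by taking the median of d independent sketch estimates.) -/
/-!
If the median lies at distance at least `t` from `c`, then so do at least half of the `d`
samples: at least half of them lie on each side of the median, and one of the two sides lies
entirely beyond `c ± t`. The indicators of the events `|X k - c| ≥ t` are independent, take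
values in `[0, 1]` and have means at most `1/4`, so by Hoeffding's inequality their sum reaches
`d/2`, at least `d/4` above its mean, with probability at most `exp (-2 d (1/4)²) = exp (-d/8)`.
-/

open MeasureTheory
open scoped ENNReal ProbabilityTheory

/-- The median of an odd number `d` of real values: the value of rank `(d+1)/2`
(i.e. zero-based index `(d-1)/2`) when the values are sorted in nondecreasing
order. -/
noncomputable def medianOdd {d : ℕ} (hd : 0 < d) (v : Fin d → ℝ) : ℝ :=
  (List.insertionSort (· ≤ ·) (List.ofFn v)).get
    ⟨(d - 1) / 2, by rw [List.length_insertionSort, List.length_ofFn]; omega⟩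

open Finset ProbabilityTheory Real

section SortedList

open List

variable {α : Type*} [LinearOrder α] {l : List α} {i : ℕ}

lemma List.Pairwise.length_sub_le_countP_ge (hl : l.Pairwise (· ≤ ·)) (hi : i < l.length) :
    l.length - i ≤ l.countP (fun x => l[i] ≤ x) := by
  have hdrop : (l[i] :: l.drop (i + 1)).Pairwise (· ≤ ·) := drop_eq_getElem_cons hi ▸ hl.drop
  have hge : ∀ x ∈ l.drop i, l[i] ≤ x := by
    rw [drop_eq_getElem_cons hi]
    exact forall_mem_cons.2 ⟨le_rfl, (pairwise_cons.1 hdrop).1⟩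
  have h := (drop_sublist i l).countP_le (p := fun x => l[i] ≤ x)
  rwa [countP_eq_length.2 (by simpa using hge), length_drop] at h

lemma List.Pairwise.succ_le_countP_le (hl : l.Pairwise (· ≤ ·)) (hi : i < l.length) :
    i + 1 ≤ l.countP (fun x => x ≤ l[i]) := by
  have htake : (l.take i ++ [l[i]]).Pairwise (· ≤ ·) := take_append_getElem hi ▸ hl.take
  have hle : ∀ x ∈ l.take (i + 1), x ≤ l[i] := by
    rw [← take_append_getElem hi]
    exact forall_mem_append.2
      ⟨fun x hx => (pairwise_append.1 htake).2.2 x hx l[i] (mem_singleton_self _), by simp⟩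
  have h := (take_sublist (i + 1) l).countP_le (p := fun x => x ≤ l[i])
  rwa [countP_eq_length.2 (by simpa using hle), length_take, min_eq_left hi] at h

end SortedList

section Median

variable {d : ℕ} (hd : 0 < d) (v : Fin d → ℝ)

lemma countP_insertionSort_ofFn (p : ℝ → Prop) [DecidablePred p] :
    ((List.ofFn v).insertionSort (· ≤ ·)).countP (fun x => p x) = #{k | p (v k)} := by
  rw [(List.perm_insertionSort _ _).countP_eq, card_def, filter_val,
    ← Multiset.countP_eq_card_filter, Fin.univ_def, Multiset.coe_countP, List.ofFn_eq_map,
    List.countP_map]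
  rfl

lemma medianOdd_eq_getElem :
    medianOdd hd v = ((List.ofFn v).insertionSort (· ≤ ·))[(d - 1) / 2]'(by simp; omega) :=
  rfl

lemma le_two_mul_card_medianOdd_le : d ≤ 2 * #{k | medianOdd hd v ≤ v k} := by
  have h := (List.pairwise_insertionSort (· ≤ ·) (List.ofFn v)).length_sub_le_countP_ge
    (i := (d - 1) / 2) (by simp; omega)
  rw [← medianOdd_eq_getElem hd, countP_insertionSort_ofFn v (medianOdd hd v ≤ ·),
    List.length_insertionSort, List.length_ofFn] at h
  omega

lemma le_two_mul_card_le_medianOdd : d ≤ 2 * #{k | v k ≤ medianOdd hd v} := by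
  have h := (List.pairwise_insertionSort (· ≤ ·) (List.ofFn v)).succ_le_countP_le
    (i := (d - 1) / 2) (by simp; omega)
  rw [← medianOdd_eq_getElem hd, countP_insertionSort_ofFn v (· ≤ medianOdd hd v)] at h
  omega

lemma le_two_mul_card_of_le_abs_medianOdd_sub {c t : ℝ} (h : t ≤ |medianOdd hd v - c|) :
    d ≤ 2 * #{k | t ≤ |v k - c|} := by
  rcases le_abs.1 h with h | h
  · refine (le_two_mul_card_medianOdd_le hd v).trans
      (Nat.mul_le_mul_left 2 (card_le_card (monotone_filter_right _ fun k _ hk => ?_)))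
    exact h.trans ((sub_le_sub_right hk c).trans (le_abs_self _))
  · refine (le_two_mul_card_le_medianOdd hd v).trans
      (Nat.mul_le_mul_left 2 (card_le_card (monotone_filter_right _ fun k _ hk => ?_)))
    exact h.trans ((neg_le_neg (sub_le_sub_right hk c)).trans (neg_le_abs _))

end Median

lemma measureReal_sum_ge_le_of_iIndepFun_of_mem_Icc {Ω ι : Type*} {m : MeasurableSpace Ω}
    {μ : Measure Ω} [IsProbabilityMeasure μ] {Y : ι → Ω → ℝ} (hindep : iIndepFun Y μ)
    (hmeas : ∀ i, AEMeasurable (Y i) μ) (hY : ∀ i, ∀ᵐ ω ∂μ, Y i ω ∈ Set.Icc 0 1)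
    {s : Finset ι} {p q : ℝ} (hp : ∀ i ∈ s, μ[Y i] ≤ p) (hpq : p ≤ q) :
    μ.real {ω | q * #s ≤ ∑ i ∈ s, Y i ω} ≤ exp (-2 * #s * (q - p) ^ 2) := by
  set Z : ι → Ω → ℝ := fun i ω => Y i ω - μ[Y i]
  have hZ_indep : iIndepFun Z μ :=
    hindep.comp (fun i x => x - ∫ ω, Y i ω ∂μ) fun _ => measurable_sub_const _
  have hsub :
      {ω | q * #s ≤ ∑ i ∈ s, Y i ω} ⊆ {ω | #s * (q - p) ≤ ∑ i ∈ s, Z i ω} := by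
    intro ω hω
    have hmean : ∑ i ∈ s, μ[Y i] ≤ #s * p := by simpa using Finset.sum_le_sum hp
    simp only [Set.mem_ofPred_eq, Z, Finset.sum_sub_distrib] at hω ⊢
    linarith
  have hoeff := HasSubgaussianMGF.measure_sum_ge_le_of_iIndepFun hZ_indep (s := s)
    (fun i _ => hasSubgaussianMGF_of_mem_Icc (hmeas i) (hY i)) (ε := #s * (q - p))
    (mul_nonneg (Nat.cast_nonneg _) (sub_nonneg.2 hpq))
  have hvar : ((∑ i ∈ s, (‖(1 : ℝ) - 0‖₊ / 2) ^ 2 : NNReal) : ℝ) = #s / 4 := by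
    norm_num [div_eq_mul_inv]
  calc μ.real {ω | q * #s ≤ ∑ i ∈ s, Y i ω}
      ≤ μ.real {ω | #s * (q - p) ≤ ∑ i ∈ s, Z i ω} := measureReal_mono hsub
    _ ≤ exp (-(#s * (q - p)) ^ 2 / (2 * (#s / 4))) := hvar ▸ hoeff
    _ = exp (-2 * #s * (q - p) ^ 2) := by
      obtain hs | hs := eq_or_ne (#s : ℝ) 0
      · simp [hs]
      · congr 1
        field_simp
        ring

theorem median_boosting_general
    {Ω : Type*} [MeasureSpace Ω] [IsProbabilityMeasure (ℙ : Measure Ω)]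
    (d : ℕ) (hdpos : 0 < d) (c t : ℝ)
    (X : Fin d → Ω → ℝ) (hmeas : ∀ k, Measurable (X k))
    -- the X_k are (mutually) independent:
    (hindep : ProbabilityTheory.iIndepFun X ℙ)
    -- each estimate deviates from c by at least t with probability at most 1/4:
    (hdev : ∀ k, ℙ {ω | t ≤ |X k ω - c|} ≤ 1 / 4) :
    ℙ {ω | t ≤ |medianOdd hdpos (fun k => X k ω) - c|}
      ≤ ENNReal.ofReal (Real.exp (-(d : ℝ) / 8)) := by
  classical
  set B : Set ℝ := {x | t ≤ |x - c|}
  have hB : MeasurableSet B := measurableSet_le measurable_const (measurable_id.sub_const c).abs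
  set Y : Fin d → Ω → ℝ := fun k => B.indicator 1 ∘ X k
  have hY_mean : ∀ k ∈ univ, ℙ[Y k] ≤ 1 / 4 := fun k _ => by
    rw [show Y k = (X k ⁻¹' B).indicator 1 from rfl, integral_indicator_one (hmeas k hB)]
    exact (ENNReal.toReal_mono (by norm_num) (hdev k)).trans_eq (by norm_num)
  have hsub : {ω | t ≤ |medianOdd hdpos (fun k => X k ω) - c|}
      ⊆ {ω | 1 / 2 * #(univ : Finset (Fin d)) ≤ ∑ k, Y k ω} := fun ω hω => by
    have hcard : (d : ℝ) ≤ 2 * #{k | t ≤ |X k ω - c|} := by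
      exact_mod_cast le_two_mul_card_of_le_abs_medianOdd_sub hdpos _ hω
    simp only [Set.mem_ofPred_eq, Y, B, Function.comp_apply, Set.indicator_apply, Pi.one_apply,
      sum_boole, card_univ, Fintype.card_fin]
    linarith
  have hoeff := measureReal_sum_ge_le_of_iIndepFun_of_mem_Icc
    (hindep.comp _ fun _ => measurable_one.indicator hB)
    (fun k => ((measurable_one.indicator hB).comp (hmeas k)).aemeasurable)
    (fun k => ae_of_all _ fun ω =>
      ⟨Set.indicator_nonneg (fun _ _ => zero_le_one) _,
        Set.indicator_le_self' (fun _ _ => zero_le_one) _⟩)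
    hY_mean (by norm_num : (1 / 4 : ℝ) ≤ 1 / 2)
  rw [ENNReal.le_ofReal_iff_toReal_le (measure_ne_top _ _) (exp_pos _).le]
  calc (ℙ : Measure Ω).real _ ≤ _ := measureReal_mono hsub
    _ ≤ _ := hoeff
    _ = exp (-d / 8) := by
      rw [card_univ, Fintype.card_fin]
      ring_nf

/-- Median boosting: if `X_1, …, X_d` (`d` odd) are i.i.d. real random variables
with `Pr[|X_k − c| ≥ t] ≤ 1/4` for each `k`, then the median of `X_1, …, X_d`
satisfies `Pr[|median − c| ≥ t] ≤ exp(−d/8)`. -/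
theorem median_boosting
    {Ω : Type*} [MeasureSpace Ω] [IsProbabilityMeasure (ℙ : Measure Ω)]
    (d : ℕ) (hd : Odd d) (hdpos : 0 < d) (c t : ℝ) (ht : 0 < t)
    (X : Fin d → Ω → ℝ) (hmeas : ∀ k, Measurable (X k))
    -- the X_k are (mutually) independent:
    (hindep : ProbabilityTheory.iIndepFun X ℙ)
    -- the X_k are identically distributed:
    (hident : ∀ k k' : Fin d, ProbabilityTheory.IdentDistrib (X k) (X k') ℙ ℙ)
    -- each estimate deviates from c by at least t with probability at most 1/4:
    (hdev : ∀ k, ℙ {ω | t ≤ |X k ω - c|} ≤ 1 / 4) :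
    ℙ {ω | t ≤ |medianOdd hdpos (fun k => X k ω) - c|}
      ≤ ENNReal.ofReal (Real.exp (-(d : ℝ) / 8)) :=
  median_boosting_general d hdpos c t X hmeas hindep hdev
end

section
/- Let w be a positive natural number and ℓ a natural number with ℓ ≤ w. Let a, c be independent random variables, each uniformly distributed on Fin (2^(2w)). For x ∈ Fin (2^w), define h_{a,c}(x) ∈ Fin (2^ℓ) to be the top ℓ bits of (a·x + c) mod 2^(2w), i.e. h_{a,c}(x) = ((a·x + c) mod 2^(2w)) / 2^(2w−ℓ) (integer division). Then the multiply-add-shift family {h_{a,c}} is 2-wise independent: for every x ∈ Fin (2^w) and u ∈ Fin (2^ℓ), Pr[h_{a,c}(x) = u] = 2^(−ℓ), and for every x ≠ y in Fin (2^w) and every u, v ∈ Fin (2^ℓ), Pr[h_{a,c}(x) = u and h_{a,c}(y) = v] = 2^(−2ℓ). -/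
open MeasureTheory
open scoped ENNReal ProbabilityTheory

/-- The multiply-add-shift hash function: for parameters `a, c ∈ [2^(2w)]` and input
`x ∈ [2^w]`, compute `(a·x + c) mod 2^(2w)` and keep the top `ℓ` bits, i.e. divide by
`2^(2w−ℓ)` (integer division). -/
def multiplyAddShift (w ℓ : ℕ) (hl : ℓ ≤ w) (a c : Fin (2^(2*w))) (x : Fin (2^w)) :
    Fin (2^ℓ) :=
  ⟨(a.val * x.val + c.val) % 2^(2*w) / 2^(2*w - ℓ), by
    apply Nat.div_lt_of_lt_mul
    calc (a.val * x.val + c.val) % 2^(2*w) < 2^(2*w) :=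
          Nat.mod_lt _ (pow_pos (by norm_num) _)
      _ = 2^(2*w - ℓ) * 2^ℓ := by rw [← pow_add]; congr 1; omega⟩

/-!
Write `N = 2^(2w) = D·L` with `D = 2^(2w-ℓ)` and `L = 2^ℓ`; the hash value is the top digit
`⌊m / D⌋` of `m = a x + c` in `ℤ/N`, and adding `D` to `m` adds `1` to that digit. So
translating `c` by `n D` shifts `h(x)` by `n`, and since `y - x` divides `D` in `ℤ/N` (it is
nonzero of absolute value `< 2^w ≤ D`), a translation of `(a, c)` shifts `h(y)` by `n` while
fixing `h(x)`. These translations are bijections of the uniformly distributed pair `(a, c)`, so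
all values of `h(x)`, and all values of `(h(x), h(y))`, are equally likely.
-/

open Finset

lemma Nat.dvd_prime_pow_of_le {p n m g : ℕ} (hp : p.Prime) (hg : g ∣ p ^ n) (hle : g ≤ p ^ m) :
    g ∣ p ^ m := by
  obtain ⟨j, -, rfl⟩ := (Nat.dvd_prime_pow hp).1 hg
  exact pow_dvd_pow p ((Nat.pow_le_pow_iff_right hp.one_lt).1 hle)

def HasShifts {α β : Type*} [Add β] (g : α → β) : Prop :=
  ∀ b, ∃ e : α ≃ α, ∀ a, g (e a) = g a + b

section Uniform

variable {Ω α β : Type*} [MeasurableSpace Ω] {μ : Measure Ω}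

lemma HasShifts.card_filter_mul_card [Fintype α] [AddCommGroup β] [Fintype β] [DecidableEq β]
    {g : α → β} (hg : HasShifts g) (b : β) :
    #{a | g a = b} * Fintype.card β = Fintype.card α := by
  have hfiber : ∀ b', #{a | g a = b'} = #{a | g a = b} := fun b' => by
    obtain ⟨e, he⟩ := hg (b' - b)
    exact (card_equiv e fun a => by
      rw [mem_filter_univ, mem_filter_univ, he, ← add_left_inj (b' - b), add_sub_cancel]).symm
  calc #{a | g a = b} * Fintype.card β = ∑ b', #{a | g a = b'} := by
        simp [hfiber, mul_comm]
    _ = Fintype.card α := (card_eq_sum_card_fiberwise fun _ _ => mem_univ _).symm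

lemma measure_prodMk_preimage_singleton [Fintype α] [Fintype β] {a : Ω → α} {c : Ω → β}
    (hindep : ∀ s t, μ {ω | a ω = s ∧ c ω = t} = μ {ω | a ω = s} * μ {ω | c ω = t})
    (ha : ∀ s, μ {ω | a ω = s} = (Fintype.card α : ℝ≥0∞)⁻¹)
    (hc : ∀ t, μ {ω | c ω = t} = (Fintype.card β : ℝ≥0∞)⁻¹) (p : α × β) :
    μ ((fun ω => (a ω, c ω)) ⁻¹' {p}) = (Fintype.card (α × β) : ℝ≥0∞)⁻¹ := by
  have hset : (fun ω => (a ω, c ω)) ⁻¹' {p} = {ω | a ω = p.1 ∧ c ω = p.2} := by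
    ext ω; simp [Prod.ext_iff]
  rw [hset, hindep, ha, hc, Fintype.card_prod, Nat.cast_mul,
    ENNReal.mul_inv (.inr (by simp)) (.inl (by simp))]

variable [IsProbabilityMeasure μ]

/- No measurability of `f` is assumed, so `μ` acts as an outer measure here: subadditivity bounds
`μ (f ⁻¹' s)` from above, and applied to `sᶜ` it also gives the matching lower bound. -/
lemma measure_preimage_eq_card_div [Fintype α] {f : Ω → α}
    (hf : ∀ a, μ (f ⁻¹' {a}) = (Fintype.card α : ℝ≥0∞)⁻¹) (s : Finset α) :
    μ (f ⁻¹' s) = #s / Fintype.card α := by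
  classical
  have upper : ∀ t : Finset α, μ (f ⁻¹' t) ≤ #t / Fintype.card α := fun t =>
    calc μ (f ⁻¹' t) = μ (⋃ a ∈ t, f ⁻¹' {a}) := by
          rw [← set_biUnion_coe, Set.biUnion_preimage_singleton]
      _ ≤ ∑ a ∈ t, μ (f ⁻¹' {a}) := measure_biUnion_finset_le _ _
      _ = #t / Fintype.card α := by simp [hf, div_eq_mul_inv]
  have hcard : (Fintype.card α : ℝ≥0∞) ≠ 0 := by
    have : Nonempty α := (nonempty_of_isProbabilityMeasure μ).map f
    exact Nat.cast_ne_zero.2 Fintype.card_ne_zero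
  have hsum : (#s / Fintype.card α : ℝ≥0∞) + #sᶜ / Fintype.card α = 1 := by
    rw [ENNReal.div_add_div_same, ← Nat.cast_add, card_add_card_compl,
      ENNReal.div_self hcard (ENNReal.natCast_ne_top _)]
  have hcover : 1 ≤ μ (f ⁻¹' s) + #sᶜ / Fintype.card α :=
    calc 1 = μ (f ⁻¹' s ∪ f ⁻¹' ↑sᶜ) := by
          rw [coe_compl, Set.preimage_compl, Set.union_compl_self, measure_univ]
      _ ≤ μ (f ⁻¹' s) + μ (f ⁻¹' ↑sᶜ) := measure_union_le _ _
      _ ≤ μ (f ⁻¹' s) + #sᶜ / Fintype.card α := add_le_add_right (upper sᶜ) _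
  refine le_antisymm (upper s) ((ENNReal.add_le_add_iff_right ?_).1 (hsum ▸ hcover))
  exact ne_top_of_le_ne_top ENNReal.one_ne_top (hsum ▸ le_add_self)

lemma HasShifts.measure_comp_eq_inv_card [Fintype α] [AddCommGroup β] [Fintype β]
    {f : Ω → α} (hf : ∀ a, μ (f ⁻¹' {a}) = (Fintype.card α : ℝ≥0∞)⁻¹)
    {g : α → β} (hg : HasShifts g) (b : β) :
    μ {ω | g (f ω) = b} = (Fintype.card β : ℝ≥0∞)⁻¹ := by
  classical
  have : Nonempty α := (nonempty_of_isProbabilityMeasure μ).map f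
  have hcount := hg.card_filter_mul_card b
  have hpos : (#{a | g a = b} : ℝ≥0∞) ≠ 0 := by
    refine Nat.cast_ne_zero.2 fun h => Fintype.card_ne_zero (α := α) ?_
    rw [← hcount, h, zero_mul]
  have hset : {ω | g (f ω) = b} = f ⁻¹' ↑({a | g a = b} : Finset α) := by ext; simp
  rw [hset, measure_preimage_eq_card_div hf, ← hcount, Nat.cast_mul, ENNReal.div_eq_inv_mul,
    ENNReal.mul_inv (.inl hpos) (.inl (by simp)), mul_comm, ← mul_assoc,
    ENNReal.mul_inv_cancel hpos (by simp), one_mul]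

end Uniform

section ModularArithmetic

open Fin.CommRing

lemma Fin.intCast_dvd_natCast_of_gcd_dvd {N D : ℕ} [NeZero N] {e : ℤ} (h : Int.gcd e N ∣ D) :
    (e : Fin N) ∣ (D : Fin N) := by
  have hbezout : ((Int.gcd e N : ℕ) : Fin N) = e * (e.gcdA N : Fin N) := by
    have := congrArg (Int.cast : ℤ → Fin N) (Int.gcd_eq_gcd_ab e N)
    push_cast at this
    rw [this, Fin.natCast_self, zero_mul, add_zero]
  exact hbezout ▸ Dvd.intro _ rfl |>.trans (Nat.cast_dvd_cast h)

lemma Fin.intCast_dvd_two_pow {n k : ℕ} {e : ℤ} (he : e ≠ 0) (hle : e.natAbs ≤ 2 ^ k) :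
    (e : Fin (2 ^ n)) ∣ 2 ^ k := by
  have hgcd : Int.gcd e (2 ^ n : ℕ) ∣ 2 ^ k :=
    Nat.dvd_prime_pow_of_le Nat.prime_two (by simpa using Int.gcd_dvd_natAbs_right e (2 ^ n))
      ((Int.gcd_le_natAbs_left _ he).trans hle)
  simpa using Fin.intCast_dvd_natCast_of_gcd_dvd hgcd

/-- `(m / D) mod L`; for `N = D * L` the reduction mod `L` is vacuous. -/
def topDigit (D L : ℕ) [NeZero L] {N : ℕ} (m : Fin N) : Fin L := ((m.val / D : ℕ) : Fin L)

variable {N D L : ℕ} [NeZero N] [NeZero L]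

lemma topDigit_add_natCast_mul (hN : N = D * L) (m : Fin N) (n : ℕ) :
    topDigit D L (m + (n : Fin N) * (D : Fin N)) = topDigit D L m + n := by
  have hD : 0 < D := Nat.pos_of_ne_zero fun h => NeZero.ne N (by rw [hN, h, zero_mul])
  have hval : ∀ k, (k + n * D) % N / D % L = (k / D + n) % L := fun k => by
    rw [hN, Nat.mod_mul_right_div_self, Nat.add_mul_div_right _ _ hD, Nat.mod_mod]
  apply Fin.ext
  simp only [topDigit, ← Nat.cast_mul, Fin.val_add, Fin.val_natCast, Nat.add_mod_mod,
    Nat.mod_add_mod, hval]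

lemma hasShifts_topDigit_mul_add (hN : N = D * L) (x : Fin N) :
    HasShifts fun p : Fin N × Fin N => topDigit D L (p.1 * x + p.2) := fun b => by
  refine ⟨Equiv.addRight (0, (b.val : Fin N) * D), fun p => ?_⟩
  simp only [Equiv.coe_addRight, Prod.fst_add, Prod.snd_add, add_zero, ← add_assoc,
    topDigit_add_natCast_mul hN, Fin.cast_val_eq_self]

lemma hasShifts_topDigit_mul_add_pair (hN : N = D * L) {x y a₀ : Fin N}
    (ha₀ : a₀ * (y - x) = D) :
    HasShifts fun p : Fin N × Fin N =>
      (topDigit D L (p.1 * x + p.2), topDigit D L (p.1 * y + p.2)) := by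
  rintro ⟨s, t⟩
  set n : ℕ := (t - s).val
  refine ⟨Equiv.addRight ((n : Fin N) * a₀, (s.val : Fin N) * D - n * a₀ * x), fun p => ?_⟩
  have hx : (p.1 + n * a₀) * x + (p.2 + (s.val * D - n * a₀ * x)) =
      (p.1 * x + p.2) + (s.val : Fin N) * D := by ring
  have hy : (p.1 + n * a₀) * y + (p.2 + (s.val * D - n * a₀ * x)) =
      (p.1 * y + p.2) + ((s.val + n : ℕ) : Fin N) * D := by
    push_cast; linear_combination (n : Fin N) * ha₀
  have hst : ((s.val + n : ℕ) : Fin L) = t := by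
    simp only [n, Nat.cast_add, Fin.cast_val_eq_self, add_sub_cancel]
  simp only [Equiv.coe_addRight, Prod.fst_add, Prod.snd_add, hx, hy,
    topDigit_add_natCast_mul hN, Fin.cast_val_eq_self, hst, Prod.mk_add_mk]

lemma two_pow_two_mul_eq {w ℓ : ℕ} (hl : ℓ ≤ w) : 2 ^ (2 * w) = 2 ^ (2 * w - ℓ) * 2 ^ ℓ := by
  rw [← pow_add]; congr 1; omega

lemma multiplyAddShift_eq_topDigit {w ℓ : ℕ} (hl : ℓ ≤ w) (a c : Fin (2 ^ (2 * w)))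
    (x : Fin (2 ^ w)) :
    multiplyAddShift w ℓ hl a c x =
      topDigit (2 ^ (2 * w - ℓ)) (2 ^ ℓ) (a * (x.val : Fin (2 ^ (2 * w))) + c) := by
  have hx : x.val < 2 ^ (2 * w) := x.isLt.trans_le (Nat.pow_le_pow_right two_pos (by omega))
  apply Fin.ext
  simp only [multiplyAddShift, topDigit, Fin.val_add, Fin.val_mul, Fin.val_natCast,
    Nat.mod_eq_of_lt hx, Nat.mod_add_mod]
  exact (Nat.mod_eq_of_lt (multiplyAddShift w ℓ hl a c x).isLt).symm

lemma hasShifts_multiplyAddShift {w ℓ : ℕ} (hl : ℓ ≤ w) (x : Fin (2 ^ w)) :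
    HasShifts fun p : Fin (2 ^ (2 * w)) × Fin (2 ^ (2 * w)) =>
      multiplyAddShift w ℓ hl p.1 p.2 x := by
  simpa only [multiplyAddShift_eq_topDigit hl] using
    hasShifts_topDigit_mul_add (two_pow_two_mul_eq hl) _

lemma hasShifts_multiplyAddShift_pair {w ℓ : ℕ} (hl : ℓ ≤ w) {x y : Fin (2 ^ w)} (hxy : x ≠ y) :
    HasShifts fun p : Fin (2 ^ (2 * w)) × Fin (2 ^ (2 * w)) =>
      (multiplyAddShift w ℓ hl p.1 p.2 x, multiplyAddShift w ℓ hl p.1 p.2 y) := by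
  have hne : (y.val : ℤ) - x.val ≠ 0 := sub_ne_zero.2 fun h => hxy (Fin.ext (by omega))
  have hle : ((y.val : ℤ) - x.val).natAbs ≤ 2 ^ (2 * w - ℓ) := by
    have := Nat.pow_le_pow_right two_pos (show w ≤ 2 * w - ℓ by omega)
    have := x.isLt
    have := y.isLt
    omega
  obtain ⟨a₀, ha₀⟩ := Fin.intCast_dvd_two_pow (n := 2 * w) hne hle
  simp only [multiplyAddShift_eq_topDigit hl]
  refine hasShifts_topDigit_mul_add_pair (two_pow_two_mul_eq hl) (a₀ := a₀) ?_
  push_cast at ha₀ ⊢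
  exact (mul_comm _ _).trans ha₀.symm

end ModularArithmetic

theorem multiplyAddShift_two_wise_independent_general
    {Ω : Type*} [MeasureSpace Ω] [IsProbabilityMeasure (ℙ : Measure Ω)]
    (w ℓ : ℕ) (hl : ℓ ≤ w)
    (a c : Ω → Fin (2^(2*w)))
    -- a and c are independent:
    (hindep : ∀ s t : Fin (2^(2*w)),
      ℙ {ω | a ω = s ∧ c ω = t} = ℙ {ω | a ω = s} * ℙ {ω | c ω = t})
    -- a and c are each uniformly distributed on Fin (2^(2w)):
    (haunif : ∀ s, ℙ {ω | a ω = s} = 1 / (2^(2*w) : ℝ≥0∞))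
    (hcunif : ∀ t, ℙ {ω | c ω = t} = 1 / (2^(2*w) : ℝ≥0∞)) :
    (∀ (x : Fin (2^w)) (u : Fin (2^ℓ)),
      ℙ {ω | multiplyAddShift w ℓ hl (a ω) (c ω) x = u} = 1 / (2^ℓ : ℝ≥0∞)) ∧
    (∀ x y : Fin (2^w), x ≠ y → ∀ u v : Fin (2^ℓ),
      ℙ {ω | multiplyAddShift w ℓ hl (a ω) (c ω) x = u ∧
             multiplyAddShift w ℓ hl (a ω) (c ω) y = v} = 1 / (2^(2*ℓ) : ℝ≥0∞)) := by
  have hunif := measure_prodMk_preimage_singleton hindep (by simpa using haunif)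
    (by simpa using hcunif)
  refine ⟨fun x u => ?_, fun x y hxy u v => ?_⟩
  · simpa using (hasShifts_multiplyAddShift hl x).measure_comp_eq_inv_card hunif u
  · simpa [two_mul, pow_add] using
      (hasShifts_multiplyAddShift_pair hl hxy).measure_comp_eq_inv_card hunif (u, v)

/-- The multiply-add-shift family is 2-wise independent: with `a, c` independent and
each uniform on `Fin (2^(2w))`, every hash value `h_{a,c}(x)` is uniform on
`Fin (2^ℓ)`, and for `x ≠ y` the pair of hash values is uniform on
`Fin (2^ℓ) × Fin (2^ℓ)`, i.e. `Pr[h(x) = u ∧ h(y) = v] = 2^(−2ℓ)`. -/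
theorem multiplyAddShift_two_wise_independent
    {Ω : Type*} [MeasureSpace Ω] [IsProbabilityMeasure (ℙ : Measure Ω)]
    (w ℓ : ℕ) (hw : 0 < w) (hl : ℓ ≤ w)
    (a c : Ω → Fin (2^(2*w)))
    -- a and c are independent:
    (hindep : ∀ s t : Fin (2^(2*w)),
      ℙ {ω | a ω = s ∧ c ω = t} = ℙ {ω | a ω = s} * ℙ {ω | c ω = t})
    -- a and c are each uniformly distributed on Fin (2^(2w)):
    (haunif : ∀ s, ℙ {ω | a ω = s} = 1 / (2^(2*w) : ℝ≥0∞))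
    (hcunif : ∀ t, ℙ {ω | c ω = t} = 1 / (2^(2*w) : ℝ≥0∞)) :
    (∀ (x : Fin (2^w)) (u : Fin (2^ℓ)),
      ℙ {ω | multiplyAddShift w ℓ hl (a ω) (c ω) x = u} = 1 / (2^ℓ : ℝ≥0∞)) ∧
    (∀ x y : Fin (2^w), x ≠ y → ∀ u v : Fin (2^ℓ),
      ℙ {ω | multiplyAddShift w ℓ hl (a ω) (c ω) x = u ∧
             multiplyAddShift w ℓ hl (a ω) (c ω) y = v} = 1 / (2^(2*ℓ) : ℝ≥0∞)) :=
  multiplyAddShift_two_wise_independent_general w ℓ hl a c hindep haunif hcunif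
end
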